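/- arXiv:math/0406167 — 12 statements merged into one kernel-verified Lean document; each statement's English description precedes it below -/
import Mathlib

section
/- Let A be a unital Banach algebra, B a closed unital subalgebra, E : A → B a conditional expectation (linear, norm-decreasing, E(b)=b for b∈B, and E(b₁ a b₂) = b₁ E(a) b₂). For a ∈ A with a ≠ 0, define g_a(b) = b·E((1−ab)⁻¹) for ‖b‖ < 1/‖a‖. Then for b₁, b₂ with ‖b₁‖, ‖b₂‖ < α/‖a‖ and 0 < α < 1, one has ‖(g_a(b₁) − g_a(b₂)) − (b₁ − b₂)‖ ≤ (1/(1−α)² − 1)·‖b₁ − b₂‖. -/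
/-- `g_a(b) = b ⬝ E((1 - ab)⁻¹)`. -/
noncomputable def gA {A : Type*} [NormedRing A] [NormedAlgebra ℂ A] [CompleteSpace A]
    (E : A →L[ℂ] A) (a b : A) : A :=
  b * E (Ring.inverse (1 - a * b))

theorem stmt0 {A : Type*} [NormedRing A] [NormedAlgebra ℂ A] [CompleteSpace A]
    (B : Subalgebra ℂ A) (hB : IsClosed (B : Set A))
    (E : A →L[ℂ] A) (hrange : ∀ x : A, E x ∈ B) (hfix : ∀ x ∈ B, E x = x)
    (hnorm : ∀ x : A, ‖E x‖ ≤ ‖x‖)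
    (hbimod : ∀ b₁ ∈ B, ∀ b₂ ∈ B, ∀ x : A, E (b₁ * x * b₂) = b₁ * E x * b₂)
    (a : A) (ha : a ≠ 0) (α : ℝ) (hα0 : 0 < α) (hα1 : α < 1)
    (b₁ b₂ : A) (hb₁B : b₁ ∈ B) (hb₂B : b₂ ∈ B)
    (hb₁ : ‖b₁‖ < α / ‖a‖) (hb₂ : ‖b₂‖ < α / ‖a‖) :
    ‖(gA E a b₁ - gA E a b₂) - (b₁ - b₂)‖ ≤ (1 / (1 - α) ^ 2 - 1) * ‖b₁ - b₂‖ := by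
  have ha' : 0 < ‖a‖ := norm_pos_iff.mpr ha
  have hx : ∀ b : A, ‖b‖ < α / ‖a‖ → ‖a * b‖ < α := fun b hb =>
    lt_of_le_of_lt (norm_mul_le a b) ((lt_div_iff₀' ha').mp hb)
  have hx₁ : ‖a * b₁‖ < α := hx b₁ hb₁
  have hx₂ : ‖a * b₂‖ < α := hx b₂ hb₂
  have hx₁' : ‖a * b₁‖ < 1 := hx₁.trans hα1
  have hx₂' : ‖a * b₂‖ < 1 := hx₂.trans hα1
  set c : ℝ := α / (1 - α) with hc
  have h1α : (0:ℝ) < 1 - α := by linarith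
  -- the "tail" of the geometric series
  set v₁ : A := ∑' n : ℕ, (a * b₁) ^ (n + 1) with hv₁
  set v₂ : A := ∑' n : ℕ, (a * b₂) ^ (n + 1) with hv₂
  have hvnorm : ∀ x : A, ‖x‖ < α → ‖∑' n : ℕ, x ^ (n + 1)‖ ≤ c := by
    intro x hxα
    have hs : HasSum (fun n : ℕ => α * α ^ n) (α * (1 - α)⁻¹) :=
      (hasSum_geometric_of_lt_one hα0.le hα1).mul_left α
    have hb : ∀ n : ℕ, ‖x ^ (n + 1)‖ ≤ α * α ^ n := by
      intro n
      calc ‖x ^ (n + 1)‖ ≤ ‖x‖ ^ (n + 1) := norm_pow_le' x n.succ_pos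
        _ ≤ α ^ (n + 1) := pow_le_pow_left₀ (norm_nonneg x) hxα.le _
        _ = α * α ^ n := by ring
    calc ‖∑' n : ℕ, x ^ (n + 1)‖ ≤ α * (1 - α)⁻¹ := tsum_of_norm_bounded hs hb
      _ = c := by rw [hc, div_eq_mul_inv]
  have hv₁n : ‖v₁‖ ≤ c := hvnorm _ hx₁
  have hv₂n : ‖v₂‖ ≤ c := hvnorm _ hx₂
  have hinv : ∀ x : A, ‖x‖ < 1 →
      Ring.inverse (1 - x) = 1 + ∑' n : ℕ, x ^ (n + 1) := by
    intro x h
    rw [← geom_series_eq_inverse x h, geom_series_succ x h]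
    abel
  set u₁ : A := Ring.inverse (1 - a * b₁) with hu₁
  set u₂ : A := Ring.inverse (1 - a * b₂) with hu₂
  have hu₁v : u₁ = 1 + v₁ := hinv _ hx₁'
  have hu₂v : u₂ = 1 + v₂ := hinv _ hx₂'
  set d : A := b₁ - b₂ with hd
  set w : A := a * d with hw
  -- resolvent identity
  have hdiff : u₁ - u₂ = u₁ * w * u₂ := by
    have h1 : u₁ * ((1 - a * b₂) * u₂) = u₁ := by
      rw [hu₂, Ring.mul_inverse_cancel _ (isUnit_one_sub_of_norm_lt_one hx₂'), mul_one]
    have h2 : (u₁ * (1 - a * b₁)) * u₂ = u₂ := by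
      rw [hu₁, Ring.inverse_mul_cancel _ (isUnit_one_sub_of_norm_lt_one hx₁'), one_mul]
    calc u₁ - u₂ = u₁ * ((1 - a * b₂) * u₂) - (u₁ * (1 - a * b₁)) * u₂ := by rw [h1, h2]
      _ = u₁ * w * u₂ := by rw [hw, hd]; noncomm_ring
  have hE1 : E 1 = 1 := hfix 1 B.one_mem
  -- key algebraic identity
  have key : (gA E a b₁ - gA E a b₂) - (b₁ - b₂)
      = d * E v₁ + b₂ * E ((1 + v₁) * w * (1 + v₂)) := by
    have hb₁d : b₁ = d + b₂ := by rw [hd]; abel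
    have hEv : E u₁ - 1 = E v₁ := by
      rw [hu₁v]; rw [map_add, hE1]; abel
    have hEd : E u₁ - E u₂ = E ((1 + v₁) * w * (1 + v₂)) := by
      rw [← map_sub, ← hu₁v, ← hu₂v, ← hdiff]
    calc (gA E a b₁ - gA E a b₂) - (b₁ - b₂)
        = b₁ * E u₁ - b₂ * E u₂ - d := by rw [gA, gA, ← hu₁, ← hu₂, hd]
      _ = d * (E u₁ - 1) + b₂ * (E u₁ - E u₂) := by rw [hb₁d]; noncomm_ring
      _ = d * E v₁ + b₂ * E ((1 + v₁) * w * (1 + v₂)) := by rw [hEv, hEd]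
  rw [key]
  have hwn : ‖w‖ ≤ ‖a‖ * ‖d‖ := norm_mul_le a d
  have hcpos : (0:ℝ) ≤ c := div_nonneg hα0.le h1α.le
  -- norm of the middle product
  have hmid : ‖(1 + v₁) * w * (1 + v₂)‖ ≤ ‖w‖ * (1 + c) ^ 2 := by
    have hexp : (1 + v₁) * w * (1 + v₂) = w + v₁ * w + (w * v₂ + v₁ * w * v₂) := by
      noncomm_ring
    rw [hexp]
    have e1 : ‖v₁ * w‖ ≤ c * ‖w‖ :=
      le_trans (norm_mul_le _ _) (mul_le_mul_of_nonneg_right hv₁n (norm_nonneg _))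
    have e2 : ‖w * v₂‖ ≤ ‖w‖ * c :=
      le_trans (norm_mul_le _ _) (mul_le_mul_of_nonneg_left hv₂n (norm_nonneg _))
    have e3 : ‖v₁ * w * v₂‖ ≤ c * ‖w‖ * c := by
      calc ‖v₁ * w * v₂‖ ≤ ‖v₁ * w‖ * ‖v₂‖ := norm_mul_le _ _
        _ ≤ (c * ‖w‖) * c := by
            apply mul_le_mul e1 hv₂n (norm_nonneg _)
            positivity
    calc ‖w + v₁ * w + (w * v₂ + v₁ * w * v₂)‖
        ≤ ‖w + v₁ * w‖ + ‖w * v₂ + v₁ * w * v₂‖ := norm_add_le _ _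
      _ ≤ (‖w‖ + ‖v₁ * w‖) + (‖w * v₂‖ + ‖v₁ * w * v₂‖) :=
          add_le_add (norm_add_le _ _) (norm_add_le _ _)
      _ ≤ (‖w‖ + c * ‖w‖) + (‖w‖ * c + c * ‖w‖ * c) :=
          add_le_add (add_le_add le_rfl e1) (add_le_add e2 e3)
      _ = ‖w‖ * (1 + c) ^ 2 := by ring
  have hb₂a : ‖b₂‖ * ‖a‖ ≤ α := by
    have := (lt_div_iff₀ ha').mp hb₂
    linarith
  have h2 : ‖b₂ * E ((1 + v₁) * w * (1 + v₂))‖ ≤ α * ‖d‖ * (1 + c) ^ 2 := by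
    calc ‖b₂ * E ((1 + v₁) * w * (1 + v₂))‖
        ≤ ‖b₂‖ * ‖E ((1 + v₁) * w * (1 + v₂))‖ := norm_mul_le _ _
      _ ≤ ‖b₂‖ * (‖w‖ * (1 + c) ^ 2) := by
          apply mul_le_mul_of_nonneg_left _ (norm_nonneg _)
          exact le_trans (hnorm _) hmid
      _ ≤ α * ‖d‖ * (1 + c) ^ 2 := by
          have : ‖b₂‖ * ‖w‖ ≤ α * ‖d‖ := by
            calc ‖b₂‖ * ‖w‖ ≤ ‖b₂‖ * (‖a‖ * ‖d‖) :=
                  mul_le_mul_of_nonneg_left hwn (norm_nonneg _)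
              _ = (‖b₂‖ * ‖a‖) * ‖d‖ := by ring
              _ ≤ α * ‖d‖ := mul_le_mul_of_nonneg_right hb₂a (norm_nonneg _)
          nlinarith [sq_nonneg (1 + c), norm_nonneg d, norm_nonneg b₂, norm_nonneg w]
  have h1 : ‖d * E v₁‖ ≤ ‖d‖ * c := by
    calc ‖d * E v₁‖ ≤ ‖d‖ * ‖E v₁‖ := norm_mul_le _ _
      _ ≤ ‖d‖ * c := mul_le_mul_of_nonneg_left (le_trans (hnorm _) hv₁n) (norm_nonneg _)
  have hconst : c + α * (1 + c) ^ 2 = 1 / (1 - α) ^ 2 - 1 := by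
    rw [hc]; field_simp; ring
  calc ‖d * E v₁ + b₂ * E ((1 + v₁) * w * (1 + v₂))‖
      ≤ ‖d * E v₁‖ + ‖b₂ * E ((1 + v₁) * w * (1 + v₂))‖ := norm_add_le _ _
    _ ≤ ‖d‖ * c + α * ‖d‖ * (1 + c) ^ 2 := add_le_add h1 h2
    _ = (c + α * (1 + c) ^ 2) * ‖d‖ := by ring
    _ = (1 / (1 - α) ^ 2 - 1) * ‖d‖ := by rw [hconst]
end

section
/- With the setup of a conditional expectation E : A → B and a ∈ A nonzero, the map g_a(b) = b·E((1−ab)⁻¹) is injective on the open ball B(0, 1/(4‖a‖)) in B. -/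
set_option maxHeartbeats 1000000


theorem stmt1 {A : Type*} [NormedRing A] [NormedAlgebra ℂ A] [CompleteSpace A]
    (B : Subalgebra ℂ A) (hB : IsClosed (B : Set A))
    (E : A →L[ℂ] A) (hrange : ∀ x : A, E x ∈ B) (hfix : ∀ x ∈ B, E x = x)
    (hnorm : ∀ x : A, ‖E x‖ ≤ ‖x‖)
    (hbimod : ∀ b₁ ∈ B, ∀ b₂ ∈ B, ∀ x : A, E (b₁ * x * b₂) = b₁ * E x * b₂)
    (a : A) (ha : a ≠ 0)
    (b₁ b₂ : A) (hb₁B : b₁ ∈ B) (hb₂B : b₂ ∈ B)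
    (hb₁ : ‖b₁‖ < 1 / (4 * ‖a‖)) (hb₂ : ‖b₂‖ < 1 / (4 * ‖a‖))
    (heq : gA E a b₁ = gA E a b₂) :
    b₁ = b₂ := by
  have ha' : 0 < ‖a‖ := norm_pos_iff.mpr ha
  have hab₁ : ‖a * b₁‖ < 1 / 4 := by
    calc ‖a * b₁‖ ≤ ‖a‖ * ‖b₁‖ := norm_mul_le a b₁
      _ < ‖a‖ * (1 / (4 * ‖a‖)) := mul_lt_mul_of_pos_left hb₁ ha'
      _ = 1 / 4 := by field_simp
  have hab₂ : ‖a * b₂‖ < 1 / 4 := by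
    calc ‖a * b₂‖ ≤ ‖a‖ * ‖b₂‖ := norm_mul_le a b₂
      _ < ‖a‖ * (1 / (4 * ‖a‖)) := mul_lt_mul_of_pos_left hb₂ ha'
      _ = 1 / 4 := by field_simp
  have hab₂' : ‖a‖ * ‖b₂‖ < 1 / 4 := by
    calc ‖a‖ * ‖b₂‖ < ‖a‖ * (1 / (4 * ‖a‖)) := mul_lt_mul_of_pos_left hb₂ ha'
      _ = 1 / 4 := by field_simp
  have hu₁ : IsUnit (1 - a * b₁) :=
    isUnit_one_sub_of_norm_lt_one (by linarith)
  have hu₂ : IsUnit (1 - a * b₂) :=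
    isUnit_one_sub_of_norm_lt_one (by linarith)
  simp only [gA] at heq
  set r₁ := Ring.inverse (1 - a * b₁) with hr₁def
  set r₂ := Ring.inverse (1 - a * b₂) with hr₂def
  have key₁ : (1 - a * b₁) * r₁ = 1 := Ring.mul_inverse_cancel _ hu₁
  have key₂ : (1 - a * b₂) * r₂ = 1 := Ring.mul_inverse_cancel _ hu₂
  have key₁' : r₁ * (1 - a * b₁) = 1 := Ring.inverse_mul_cancel _ hu₁
  have e₁ : r₁ = 1 + a * b₁ * r₁ := by
    rw [sub_mul, one_mul] at key₁
    exact sub_eq_iff_eq_add.mp key₁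
  have e₂ : r₂ = 1 + a * b₂ * r₂ := by
    rw [sub_mul, one_mul] at key₂
    exact sub_eq_iff_eq_add.mp key₂
  -- self-improving bound on ‖a*bᵢ*rᵢ‖
  have hs₁ : ‖a * b₁ * r₁‖ ≤ 1 / 3 := by
    have h : a * b₁ * r₁ = a * b₁ + a * b₁ * (a * b₁ * r₁) := by
      calc a * b₁ * r₁ = a * b₁ * (1 + a * b₁ * r₁) := by rw [← e₁]
        _ = a * b₁ + a * b₁ * (a * b₁ * r₁) := by rw [mul_add, mul_one]
    have h2 : ‖a * b₁ * r₁‖ ≤ ‖a * b₁‖ + ‖a * b₁‖ * ‖a * b₁ * r₁‖ := by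
      nth_rewrite 1 [h]
      exact (norm_add_le _ _).trans (add_le_add le_rfl (norm_mul_le _ _))
    nlinarith [norm_nonneg (a * b₁ * r₁)]
  have hs₂ : ‖a * b₂ * r₂‖ ≤ 1 / 3 := by
    have h : a * b₂ * r₂ = a * b₂ + a * b₂ * (a * b₂ * r₂) := by
      calc a * b₂ * r₂ = a * b₂ * (1 + a * b₂ * r₂) := by rw [← e₂]
        _ = a * b₂ + a * b₂ * (a * b₂ * r₂) := by rw [mul_add, mul_one]
    have h2 : ‖a * b₂ * r₂‖ ≤ ‖a * b₂‖ + ‖a * b₂‖ * ‖a * b₂ * r₂‖ := by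
      nth_rewrite 1 [h]
      exact (norm_add_le _ _).trans (add_le_add le_rfl (norm_mul_le _ _))
    nlinarith [norm_nonneg (a * b₂ * r₂)]
  have hE1 : E 1 = 1 := hfix 1 B.one_mem
  have hEr₁ : E r₁ = 1 + E (a * b₁ * r₁) := by
    nth_rewrite 1 [e₁]
    rw [map_add, hE1]
  have hEr₂ : E r₂ = 1 + E (a * b₂ * r₂) := by
    nth_rewrite 1 [e₂]
    rw [map_add, hE1]
  rw [hEr₁, hEr₂] at heq
  simp only [mul_add, mul_one] at heq
  have hd : b₁ - b₂ = b₂ * E (a * b₂ * r₂) - b₁ * E (a * b₁ * r₁) := by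
    rw [sub_eq_sub_iff_add_eq_add, heq]
    exact add_comm _ _
  have hdiff : r₁ - r₂ = r₁ * (a * (b₁ - b₂) * r₂) := by
    calc r₁ - r₂ = r₁ * ((1 - a * b₂) * r₂) - r₁ * (1 - a * b₁) * r₂ := by
          rw [key₂, key₁', mul_one, one_mul]
      _ = r₁ * (a * (b₁ - b₂) * r₂) := by noncomm_ring
  have h1 : E (a * (b₁ - b₂) * r₁) = E (a * b₁ * r₁) - E (a * b₂ * r₁) := by
    rw [← map_sub]; congr 1; noncomm_ring
  have h2 : E (a * b₂ * (r₁ - r₂)) = E (a * b₂ * r₁) - E (a * b₂ * r₂) := by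
    rw [← map_sub]; congr 1; noncomm_ring
  have hsplit : b₁ - b₂ = -((b₁ - b₂) * E (a * b₁ * r₁)) - b₂ * E (a * (b₁ - b₂) * r₁)
      - b₂ * E (a * b₂ * (r₁ - r₂)) := by
    rw [h1, h2]
    calc b₁ - b₂ = b₂ * E (a * b₂ * r₂) - b₁ * E (a * b₁ * r₁) := hd
      _ = -((b₁ - b₂) * E (a * b₁ * r₁)) - b₂ * (E (a * b₁ * r₁) - E (a * b₂ * r₁))
          - b₂ * (E (a * b₂ * r₁) - E (a * b₂ * r₂)) := by noncomm_ring
  -- norm bounds for each term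
  have hT1 : ‖(b₁ - b₂) * E (a * b₁ * r₁)‖ ≤ ‖b₁ - b₂‖ * (1 / 3) := by
    calc ‖(b₁ - b₂) * E (a * b₁ * r₁)‖ ≤ ‖b₁ - b₂‖ * ‖E (a * b₁ * r₁)‖ := norm_mul_le _ _
      _ ≤ ‖b₁ - b₂‖ * (1 / 3) := by gcongr; exact (hnorm _).trans hs₁
  have hadr : ∀ r b : A, r = 1 + a * b * r → ‖a * b * r‖ ≤ 1 / 3 →
      ‖a * (b₁ - b₂) * r‖ ≤ 4 / 3 * (‖a‖ * ‖b₁ - b₂‖) := by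
    intro r b he hs
    have h : a * (b₁ - b₂) * r = a * (b₁ - b₂) + a * (b₁ - b₂) * (a * b * r) := by
      calc a * (b₁ - b₂) * r = a * (b₁ - b₂) * (1 + a * b * r) := by rw [← he]
        _ = a * (b₁ - b₂) + a * (b₁ - b₂) * (a * b * r) := by rw [mul_add, mul_one]
    have hn : ‖a * (b₁ - b₂)‖ ≤ ‖a‖ * ‖b₁ - b₂‖ := norm_mul_le _ _
    have h2 : ‖a * (b₁ - b₂) * r‖ ≤ ‖a * (b₁ - b₂)‖ + ‖a * (b₁ - b₂)‖ * ‖a * b * r‖ := by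
      rw [h]
      exact (norm_add_le _ _).trans (add_le_add le_rfl (norm_mul_le _ _))
    nlinarith [norm_nonneg (a * (b₁ - b₂)), norm_nonneg a, norm_nonneg (b₁ - b₂)]
  have hT2 : ‖b₂ * E (a * (b₁ - b₂) * r₁)‖ ≤ ‖b₁ - b₂‖ * (1 / 3) := by
    have hh : ‖b₂ * E (a * (b₁ - b₂) * r₁)‖ ≤ ‖b₂‖ * (4 / 3 * (‖a‖ * ‖b₁ - b₂‖)) := by
      calc ‖b₂ * E (a * (b₁ - b₂) * r₁)‖ ≤ ‖b₂‖ * ‖E (a * (b₁ - b₂) * r₁)‖ := norm_mul_le _ _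
        _ ≤ ‖b₂‖ * (4 / 3 * (‖a‖ * ‖b₁ - b₂‖)) := by
            gcongr
            exact (hnorm _).trans (hadr r₁ b₁ e₁ hs₁)
    nlinarith [norm_nonneg b₂, norm_nonneg (b₁ - b₂), norm_nonneg a]
  have hT3 : ‖b₂ * E (a * b₂ * (r₁ - r₂))‖ ≤ ‖b₁ - b₂‖ * (1 / 9) := by
    have hw : ‖a * (b₁ - b₂) * r₂‖ ≤ 4 / 3 * (‖a‖ * ‖b₁ - b₂‖) := hadr r₂ b₂ e₂ hs₂
    have hrw : ‖r₁ * (a * (b₁ - b₂) * r₂)‖ ≤ 4 / 3 * ‖a * (b₁ - b₂) * r₂‖ := by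
      have h : r₁ * (a * (b₁ - b₂) * r₂)
          = a * (b₁ - b₂) * r₂ + a * b₁ * r₁ * (a * (b₁ - b₂) * r₂) := by
        nth_rewrite 1 [e₁]
        rw [add_mul, one_mul]
      have h2 : ‖r₁ * (a * (b₁ - b₂) * r₂)‖
          ≤ ‖a * (b₁ - b₂) * r₂‖ + ‖a * b₁ * r₁‖ * ‖a * (b₁ - b₂) * r₂‖ := by
        rw [h]
        exact (norm_add_le _ _).trans (add_le_add le_rfl (norm_mul_le _ _))
      nlinarith [norm_nonneg (a * (b₁ - b₂) * r₂)]
    have harg : ‖a * b₂ * (r₁ - r₂)‖ ≤ 1 / 4 * (4 / 3 * (4 / 3 * (‖a‖ * ‖b₁ - b₂‖))) := by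
      rw [hdiff]
      calc ‖a * b₂ * (r₁ * (a * (b₁ - b₂) * r₂))‖
          ≤ ‖a * b₂‖ * ‖r₁ * (a * (b₁ - b₂) * r₂)‖ := norm_mul_le _ _
        _ ≤ 1 / 4 * (4 / 3 * (4 / 3 * (‖a‖ * ‖b₁ - b₂‖))) := by
            apply mul_le_mul hab₂.le (hrw.trans (by linarith)) (norm_nonneg _) (by norm_num)
    have hh : ‖b₂ * E (a * b₂ * (r₁ - r₂))‖
        ≤ ‖b₂‖ * (1 / 4 * (4 / 3 * (4 / 3 * (‖a‖ * ‖b₁ - b₂‖)))) := by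
      calc ‖b₂ * E (a * b₂ * (r₁ - r₂))‖ ≤ ‖b₂‖ * ‖E (a * b₂ * (r₁ - r₂))‖ := norm_mul_le _ _
        _ ≤ _ := by gcongr; exact (hnorm _).trans harg
    nlinarith [norm_nonneg b₂, norm_nonneg (b₁ - b₂), norm_nonneg a]
  have hfinal : ‖b₁ - b₂‖ ≤ ‖b₁ - b₂‖ * (7 / 9) := by
    calc ‖b₁ - b₂‖
        = ‖-((b₁ - b₂) * E (a * b₁ * r₁)) - b₂ * E (a * (b₁ - b₂) * r₁)
            - b₂ * E (a * b₂ * (r₁ - r₂))‖ := by rw [← hsplit]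
      _ ≤ ‖-((b₁ - b₂) * E (a * b₁ * r₁)) - b₂ * E (a * (b₁ - b₂) * r₁)‖
            + ‖b₂ * E (a * b₂ * (r₁ - r₂))‖ := norm_sub_le _ _
      _ ≤ ‖-((b₁ - b₂) * E (a * b₁ * r₁))‖ + ‖b₂ * E (a * (b₁ - b₂) * r₁)‖
            + ‖b₂ * E (a * b₂ * (r₁ - r₂))‖ :=
          add_le_add (norm_sub_le _ _) le_rfl
      _ = ‖(b₁ - b₂) * E (a * b₁ * r₁)‖ + ‖b₂ * E (a * (b₁ - b₂) * r₁)‖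
            + ‖b₂ * E (a * b₂ * (r₁ - r₂))‖ := by rw [norm_neg]
      _ ≤ ‖b₁ - b₂‖ * (1 / 3) + ‖b₁ - b₂‖ * (1 / 3) + ‖b₁ - b₂‖ * (1 / 9) :=
          add_le_add (add_le_add hT1 hT2) hT3
      _ = ‖b₁ - b₂‖ * (7 / 9) := by ring
  have hdz : b₁ - b₂ = 0 := by
    have : ‖b₁ - b₂‖ ≤ 0 := by linarith
    exact norm_le_zero_iff.mp this
  exact sub_eq_zero.mp hdz
end

section
/- The map g_a restricts to a bijection from a subset of B(0, 2/(11‖a‖)) onto a set containing the closed ball of radius 1/(11‖a‖): for every b̃ ∈ B with ‖b̃‖ ≤ 1/(11‖a‖) there exists a unique b ∈ B with ‖b‖ ≤ 2/(11‖a‖) such that g_a(b) = b̃. -/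
open Set Metric Function
open scoped Ring

section NormedRing

variable {A : Type*} [NormedRing A]

theorem norm_mul_le_one_add_norm_sub_one_mul (p z : A) : ‖p * z‖ ≤ (1 + ‖p - 1‖) * ‖z‖ :=
  calc ‖p * z‖ = ‖z + (p - 1) * z‖ := by rw [sub_mul, one_mul, add_sub_cancel]
    _ ≤ ‖z‖ + ‖p - 1‖ * ‖z‖ := norm_add_le_of_le le_rfl (norm_mul_le _ _)
    _ = (1 + ‖p - 1‖) * ‖z‖ := by ring

theorem norm_mul_le_mul_one_add_norm_sub_one (z q : A) : ‖z * q‖ ≤ ‖z‖ * (1 + ‖q - 1‖) :=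
  calc ‖z * q‖ = ‖z + z * (q - 1)‖ := by rw [mul_sub, mul_one, add_sub_cancel]
    _ ≤ ‖z‖ + ‖z‖ * ‖q - 1‖ := norm_add_le_of_le le_rfl (norm_mul_le _ _)
    _ = ‖z‖ * (1 + ‖q - 1‖) := by ring

-- Measured by `‖· - 1‖` rather than `‖·‖`, so that no `NormOneClass` is needed.
theorem norm_inverse_sub_inverse_le {u v : A} (h : IsUnit u ↔ IsUnit v) :
    ‖u⁻¹ʳ - v⁻¹ʳ‖ ≤ (1 + ‖u⁻¹ʳ - 1‖) * ‖v - u‖ * (1 + ‖v⁻¹ʳ - 1‖) := by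
  rw [Ring.inverse_sub_inverse h]
  exact (norm_mul_le_mul_one_add_norm_sub_one _ _).trans
    (mul_le_mul_of_nonneg_right (norm_mul_le_one_add_norm_sub_one_mul _ _) (by positivity))

theorem norm_inverse_one_sub_sub_one_le [CompleteSpace A] {x : A} (hx : ‖x‖ < 1) :
    ‖(1 - x)⁻¹ʳ - 1‖ ≤ ‖x‖ / (1 - ‖x‖) := by
  have hinv : (1 - x)⁻¹ʳ - 1 = (1 - x)⁻¹ʳ * x := by
    calc (1 - x)⁻¹ʳ - 1 = (1 - x)⁻¹ʳ - (1 - x)⁻¹ʳ * (1 - x) := by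
          rw [Ring.inverse_mul_cancel _ (isUnit_one_sub_of_norm_lt_one hx)]
      _ = (1 - x)⁻¹ʳ * x := by noncomm_ring
  have key := norm_mul_le_one_add_norm_sub_one_mul (1 - x)⁻¹ʳ x
  rw [← hinv] at key
  rw [le_div_iff₀ (by linarith)]
  nlinarith

theorem norm_inverse_one_sub_mul_sub_one_le [CompleteSpace A] {a b : A}
    (h : ‖a‖ * ‖b‖ ≤ 2 / 11) : ‖(1 - a * b)⁻¹ʳ - 1‖ ≤ 2 / 9 := by
  have hab : ‖a * b‖ ≤ 2 / 11 := (norm_mul_le a b).trans h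
  calc ‖(1 - a * b)⁻¹ʳ - 1‖ ≤ ‖a * b‖ / (1 - ‖a * b‖) :=
        norm_inverse_one_sub_sub_one_le (by linarith)
    _ ≤ (2 / 11) / (1 - 2 / 11) := by gcongr
    _ = 2 / 9 := by norm_num

theorem norm_inverse_one_sub_mul_sub_inverse_le [CompleteSpace A] {a b b' : A}
    (hb : ‖a‖ * ‖b‖ ≤ 2 / 11) (hb' : ‖a‖ * ‖b'‖ ≤ 2 / 11) :
    ‖(1 - a * b')⁻¹ʳ - (1 - a * b)⁻¹ʳ‖ ≤ 121 / 81 * (‖a‖ * ‖b - b'‖) := by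
  have hunit : ∀ c : A, ‖a‖ * ‖c‖ ≤ 2 / 11 → IsUnit (1 - a * c) := fun c hc =>
    isUnit_one_sub_of_norm_lt_one ((norm_mul_le _ _).trans_lt (by linarith))
  calc _ ≤ (1 + ‖(1 - a * b')⁻¹ʳ - 1‖) * ‖(1 - a * b) - (1 - a * b')‖ *
          (1 + ‖(1 - a * b)⁻¹ʳ - 1‖) :=
        norm_inverse_sub_inverse_le (iff_of_true (hunit b' hb') (hunit b hb))
    _ ≤ (1 + 2 / 9) * (‖a‖ * ‖b - b'‖) * (1 + 2 / 9) := by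
        gcongr
        · exact norm_inverse_one_sub_mul_sub_one_le hb'
        · rw [sub_sub_sub_cancel_left, ← mul_sub, norm_sub_rev b b']
          exact norm_mul_le _ _
        · exact norm_inverse_one_sub_mul_sub_one_le hb
    _ = 121 / 81 * (‖a‖ * ‖b - b'‖) := by ring

theorem norm_map_sub_one_le {R : Type*} [Semiring R] [Module R A] {E : A →L[R] A}
    (hE1 : E 1 = 1) (hE : ∀ x, ‖E x‖ ≤ ‖x‖) (y : A) : ‖E y - 1‖ ≤ ‖y - 1‖ :=
  calc ‖E y - 1‖ = ‖E (y - 1)‖ := by rw [map_sub, hE1]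
    _ ≤ ‖y - 1‖ := hE _

end NormedRing

section FixedPoint

variable {α : Type*} [MetricSpace α]

theorem LipschitzOnWith.existsUnique_isFixedPt {s : Set α} {f : α → α} {K : NNReal}
    (hK : K < 1) (hf : LipschitzOnWith K f s) (hsc : IsComplete s) (hsf : MapsTo f s s)
    (hs : s.Nonempty) : ∃! x, x ∈ s ∧ IsFixedPt f x := by
  obtain ⟨x₀, hx₀⟩ := hs
  have hcontr : ContractingWith K (hsf.restrict f s s) :=
    ⟨hK, fun x y => hf x.2 y.2⟩
  obtain ⟨x, hxs, hfx, -⟩ := hcontr.exists_fixedPoint' hsc hsf hx₀ (edist_ne_top _ _)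
  refine ⟨x, ⟨hxs, hfx⟩, fun y ⟨hys, hfy⟩ => ?_⟩
  have hle : dist y x ≤ K * dist y x := by
    have := hf.dist_le_mul y hys x hxs
    rwa [hfy.eq, hfx.eq] at this
  have hK' : (K : ℝ) < 1 := hK
  exact dist_le_zero.1 (by nlinarith [dist_nonneg (x := y) (y := x)])

end FixedPoint

section gA

variable {A : Type*} [NormedRing A] [NormedAlgebra ℂ A] [CompleteSpace A]

/-- The paper's `T_{b̃}`. -/
noncomputable def gAStep (E : A →L[ℂ] A) (a bt b : A) : A :=
  bt + b - gA E a b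

variable {E : A →L[ℂ] A} {a bt b : A}

theorem gAStep_eq_self_iff : gAStep E a bt b = b ↔ gA E a b = bt := by
  rw [gAStep, add_comm bt b, add_sub_assoc, add_eq_left, sub_eq_zero, eq_comm]

theorem gAStep_eq : gAStep E a bt b = bt - b * (E (1 - a * b)⁻¹ʳ - 1) := by
  rw [gAStep, gA]
  noncomm_ring

theorem gAStep_mem {B : Subalgebra ℂ A} (hrange : ∀ x, E x ∈ B) (hbt : bt ∈ B) (hb : b ∈ B) :
    gAStep E a bt b ∈ B := by
  rw [gAStep_eq]
  exact sub_mem hbt (mul_mem hb (sub_mem (hrange _) B.one_mem))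

variable (hE1 : E 1 = 1) (hE : ∀ x, ‖E x‖ ≤ ‖x‖)
include hE1 hE

theorem norm_gAStep_le (h : ‖a‖ * ‖b‖ ≤ 2 / 11) : ‖gAStep E a bt b‖ ≤ ‖bt‖ + 2 / 9 * ‖b‖ := by
  have hEy := (norm_map_sub_one_le hE1 hE _).trans (norm_inverse_one_sub_mul_sub_one_le h)
  rw [gAStep_eq]
  calc _ ≤ ‖bt‖ + ‖b‖ * ‖E (1 - a * b)⁻¹ʳ - 1‖ := norm_sub_le_of_le le_rfl (norm_mul_le _ _)
    _ ≤ ‖bt‖ + 2 / 9 * ‖b‖ := by nlinarith [norm_nonneg b]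

theorem lipschitzOnWith_gAStep {R : ℝ} (haR : ‖a‖ * R ≤ 2 / 11) :
    LipschitzOnWith (40 / 81) (gAStep E a bt) (closedBall 0 R) := by
  refine LipschitzOnWith.of_dist_le_mul fun b hb b' hb' => ?_
  rw [mem_closedBall_zero_iff] at hb hb'
  have hsmall : ∀ c : A, ‖c‖ ≤ R → ‖a‖ * ‖c‖ ≤ 2 / 11 := fun c hc =>
    (mul_le_mul_of_nonneg_left hc (norm_nonneg a)).trans haR
  set y := (1 - a * b)⁻¹ʳ
  set y' := (1 - a * b')⁻¹ʳ
  have hy' : ‖E y' - 1‖ ≤ 2 / 9 :=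
    (norm_map_sub_one_le hE1 hE _).trans (norm_inverse_one_sub_mul_sub_one_le (hsmall b' hb'))
  have hyy : ‖E (y' - y)‖ ≤ 121 / 81 * (‖a‖ * ‖b - b'‖) :=
    (hE _).trans (norm_inverse_one_sub_mul_sub_inverse_le (hsmall b hb) (hsmall b' hb'))
  rw [dist_eq_norm, dist_eq_norm]
  calc ‖gAStep E a bt b - gAStep E a bt b'‖ = ‖(b' - b) * (E y' - 1) + b * E (y' - y)‖ := by
        rw [gAStep_eq, gAStep_eq, map_sub]
        simp only [y, y']
        noncomm_ring
    _ ≤ ‖b - b'‖ * ‖E y' - 1‖ + ‖b‖ * ‖E (y' - y)‖ := by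
        rw [norm_sub_rev b b']
        exact norm_add_le_of_le (norm_mul_le _ _) (norm_mul_le _ _)
    _ ≤ ‖b - b'‖ * (2 / 9) + R * (121 / 81 * (‖a‖ * ‖b - b'‖)) :=
        add_le_add
          (mul_le_mul_of_nonneg_left hy' (norm_nonneg _))
          (mul_le_mul hb hyy (norm_nonneg _) ((norm_nonneg b).trans hb))
    _ = (2 / 9 + 121 / 81 * (‖a‖ * R)) * ‖b - b'‖ := by ring
    _ ≤ (40 / 81 : NNReal) * ‖b - b'‖ := by
        gcongr
        push_cast
        linarith

end gA

theorem stmt5_general {A : Type*} [NormedRing A] [NormedAlgebra ℂ A] [CompleteSpace A]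
    (B : Subalgebra ℂ A) (hB : IsClosed (B : Set A))
    (E : A →L[ℂ] A) (hrange : ∀ x : A, E x ∈ B) (hfix : ∀ x ∈ B, E x = x)
    (hnorm : ∀ x : A, ‖E x‖ ≤ ‖x‖)
    (a : A)
    (bt : A) (hbtB : bt ∈ B) (hbt : ‖bt‖ ≤ 1 / (11 * ‖a‖)) :
    ∃! b : A, b ∈ B ∧ ‖b‖ ≤ 2 / (11 * ‖a‖) ∧ gA E a b = bt := by
  set R := 2 / (11 * ‖a‖)
  have haR : ‖a‖ * R ≤ 2 / 11 := by
    rcases eq_or_ne ‖a‖ 0 with h | h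
    · norm_num [R, h]
    · exact (by simp only [R]; field_simp : ‖a‖ * R = 2 / 11).le
  have hbtR : ‖bt‖ ≤ R / 2 := hbt.trans_eq (by simp only [R]; ring)
  have hE1 : E 1 = 1 := hfix 1 B.one_mem
  set S := (B : Set A) ∩ closedBall 0 R
  have hmaps : MapsTo (gAStep E a bt) S S := by
    rintro b ⟨hbB, hb⟩
    rw [mem_closedBall_zero_iff] at hb
    refine ⟨gAStep_mem hrange hbtB hbB, mem_closedBall_zero_iff.2 ?_⟩
    have := norm_gAStep_le hE1 hnorm (bt := bt)
      ((mul_le_mul_of_nonneg_left hb (norm_nonneg a)).trans haR)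
    linarith [norm_nonneg b]
  have hfixed := ((lipschitzOnWith_gAStep hE1 hnorm haR).mono inter_subset_right
    ).existsUnique_isFixedPt (by norm_num) (hB.inter isClosed_closedBall).isComplete hmaps
    ⟨0, B.zero_mem, mem_closedBall_self (by linarith [norm_nonneg bt])⟩
  refine (existsUnique_congr fun b => ?_).1 hfixed
  simp only [mem_inter_iff, SetLike.mem_coe, mem_closedBall_zero_iff, IsFixedPt,
    gAStep_eq_self_iff, and_assoc]

theorem stmt5 {A : Type*} [NormedRing A] [NormedAlgebra ℂ A] [CompleteSpace A]
    (B : Subalgebra ℂ A) (hB : IsClosed (B : Set A))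
    (E : A →L[ℂ] A) (hrange : ∀ x : A, E x ∈ B) (hfix : ∀ x ∈ B, E x = x)
    (hnorm : ∀ x : A, ‖E x‖ ≤ ‖x‖)
    (hbimod : ∀ b₁ ∈ B, ∀ b₂ ∈ B, ∀ x : A, E (b₁ * x * b₂) = b₁ * E x * b₂)
    (a : A) (ha : a ≠ 0)
    (bt : A) (hbtB : bt ∈ B) (hbt : ‖bt‖ ≤ 1 / (11 * ‖a‖)) :
    ∃! b : A, b ∈ B ∧ ‖b‖ ≤ 2 / (11 * ‖a‖) ∧ gA E a b = bt :=
  stmt5_general B hB E hrange hfix hnorm a bt hbtB hbt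
end

section
/- If ‖b‖ < 1/(2‖a‖), then g_a(b) = b·(1 + Ψ_a(b)) where Ψ_a(b) = Σ_{n≥1} E((ab)ⁿ) satisfies ‖Ψ_a(b)‖ < 1, hence 1 + Ψ_a(b) is invertible and g_a(b) is invertible in B if and only if b is invertible in B. -/
section NormedRing

variable {A : Type*} [NormedRing A]

theorem norm_mul_lt_half_of_norm_lt {a b : A} (hb : ‖b‖ < 1 / (2 * ‖a‖)) : ‖a * b‖ < 1 / 2 := by
  have ha : 0 < ‖a‖ := by
    by_contra! ha
    rw [le_antisymm ha (norm_nonneg a), mul_zero, div_zero] at hb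
    exact (norm_nonneg b).not_gt hb
  calc ‖a * b‖ ≤ ‖a‖ * ‖b‖ := norm_mul_le a b
    _ < ‖a‖ * (1 / (2 * ‖a‖)) := by gcongr
    _ = 1 / 2 := by field_simp

theorem norm_tsum_pow_succ_le_of_contraction {E : A → A} (hE : ∀ x, ‖E x‖ ≤ ‖x‖) {t : A}
    (ht : ‖t‖ < 1) : ‖∑' n : ℕ, E (t ^ (n + 1))‖ ≤ ‖t‖ / (1 - ‖t‖) := by
  have hgeom : HasSum (fun n : ℕ => ‖t‖ ^ (n + 1)) (‖t‖ / (1 - ‖t‖)) := by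
    simpa only [pow_succ', div_eq_mul_inv] using
      (hasSum_geometric_of_lt_one (norm_nonneg t) ht).mul_left ‖t‖
  exact tsum_of_norm_bounded hgeom fun n => (hE _).trans (norm_pow_le' t n.succ_pos)

theorem norm_tsum_pow_succ_lt_one_of_contraction {E : A → A} (hE : ∀ x, ‖E x‖ ≤ ‖x‖) {t : A}
    (ht : ‖t‖ < 1 / 2) : ‖∑' n : ℕ, E (t ^ (n + 1))‖ < 1 :=
  (norm_tsum_pow_succ_le_of_contraction hE (ht.trans one_half_lt_one)).trans_lt <|
    (div_lt_one (by linarith)).2 (by linarith)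

variable [HasSummableGeomSeries A]

theorem map_inverse_one_sub_eq_one_add_tsum {R : Type*} [Semiring R] [Module R A]
    (E : A →L[R] A) (hE : E 1 = 1) {t : A} (ht : ‖t‖ < 1) :
    E (Ring.inverse (1 - t)) = 1 + ∑' n : ℕ, E (t ^ (n + 1)) := by
  have hsum := summable_geometric_of_norm_lt_one ht
  have hEsum : Summable fun n : ℕ => E (t ^ n) := hsum.map E E.continuous
  rw [← geom_series_eq_inverse t ht, E.map_tsum hsum, hEsum.tsum_eq_zero_add, pow_zero, hE]

theorem exists_unit_eq_one_add_of_norm_lt_one {S : Type*} [SetLike S A] [SubringClass S A]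
    {s : S} (hs : IsClosed (s : Set A)) {x : A} (hx : x ∈ s) (hx1 : ‖x‖ < 1) :
    ∃ u : Aˣ, (u : A) = 1 + x ∧ (u : A) ∈ s ∧ ((u⁻¹ : Aˣ) : A) ∈ s := by
  refine ⟨Units.oneSub (-x) (by rwa [norm_neg]), sub_neg_eq_add 1 x, ?_, ?_⟩
  · rw [Units.val_oneSub, sub_neg_eq_add]
    exact add_mem (one_mem s) hx
  · exact tsum_mem hs fun n => pow_mem (neg_mem hx) n

end NormedRing

theorem exists_two_sided_inv_mem_mul_unit_iff {M S : Type*} [Monoid M] [SetLike S M]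
    [SubmonoidClass S M] {s : S} {u : Mˣ} (hu : (u : M) ∈ s) (hu' : ((u⁻¹ : Mˣ) : M) ∈ s)
    (x : M) :
    (∃ c ∈ s, x * u * c = 1 ∧ c * (x * u) = 1) ↔ ∃ c ∈ s, x * c = 1 ∧ c * x = 1 := by
  constructor
  · rintro ⟨c, hc, hxc, hcx⟩
    have hcx' : c * x = ((u⁻¹ : Mˣ) : M) := by
      rw [← one_mul ((u⁻¹ : Mˣ) : M), Units.eq_mul_inv_iff_mul_eq, mul_assoc, hcx]
    refine ⟨u * c, mul_mem hu hc, by rw [← mul_assoc, hxc], ?_⟩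
    rw [mul_assoc, hcx', Units.mul_inv]
  · rintro ⟨c, hc, hxc, hcx⟩
    refine ⟨((u⁻¹ : Mˣ) : M) * c, mul_mem hu' hc, ?_, ?_⟩
    · rw [mul_assoc, Units.mul_inv_cancel_left, hxc]
    · rw [mul_assoc, ← mul_assoc c, hcx, one_mul, Units.inv_mul]

theorem stmt6_general {A : Type*} [NormedRing A] [NormedAlgebra ℂ A] [CompleteSpace A]
    (B : Subalgebra ℂ A) (hB : IsClosed (B : Set A))
    (E : A →L[ℂ] A) (hrange : ∀ x : A, E x ∈ B) (hfix : ∀ x ∈ B, E x = x)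
    (hnorm : ∀ x : A, ‖E x‖ ≤ ‖x‖)
    (a : A) (b : A) (hb : ‖b‖ < 1 / (2 * ‖a‖)) :
    gA E a b = b * (1 + ∑' n : ℕ, E ((a * b) ^ (n + 1))) ∧
    ‖∑' n : ℕ, E ((a * b) ^ (n + 1))‖ < 1 ∧
    IsUnit (1 + ∑' n : ℕ, E ((a * b) ^ (n + 1))) ∧
    ((∃ c ∈ B, gA E a b * c = 1 ∧ c * gA E a b = 1) ↔ (∃ c ∈ B, b * c = 1 ∧ c * b = 1)) := by
  set Ψ := ∑' n : ℕ, E ((a * b) ^ (n + 1))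
  have hab : ‖a * b‖ < 1 / 2 := norm_mul_lt_half_of_norm_lt hb
  have hΨ : ‖Ψ‖ < 1 := norm_tsum_pow_succ_lt_one_of_contraction hnorm hab
  have hg : gA E a b = b * (1 + Ψ) := by
    rw [gA, map_inverse_one_sub_eq_one_add_tsum E (hfix 1 B.one_mem)
      (hab.trans one_half_lt_one)]
  obtain ⟨u, hu, huB, hu'B⟩ :=
    exists_unit_eq_one_add_of_norm_lt_one hB (tsum_mem hB fun n => hrange _) hΨ
  refine ⟨hg, hΨ, hu ▸ u.isUnit, ?_⟩
  rw [hg, ← hu]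
  exact exists_two_sided_inv_mem_mul_unit_iff huB hu'B b

theorem stmt6 {A : Type*} [NormedRing A] [NormedAlgebra ℂ A] [CompleteSpace A]
    (B : Subalgebra ℂ A) (hB : IsClosed (B : Set A))
    (E : A →L[ℂ] A) (hrange : ∀ x : A, E x ∈ B) (hfix : ∀ x ∈ B, E x = x)
    (hnorm : ∀ x : A, ‖E x‖ ≤ ‖x‖)
    (hbimod : ∀ b₁ ∈ B, ∀ b₂ ∈ B, ∀ x : A, E (b₁ * x * b₂) = b₁ * E x * b₂)
    (a : A) (ha : a ≠ 0) (b : A) (hbB : b ∈ B) (hb : ‖b‖ < 1 / (2 * ‖a‖)) :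
    gA E a b = b * (1 + ∑' n : ℕ, E ((a * b) ^ (n + 1))) ∧
    ‖∑' n : ℕ, E ((a * b) ^ (n + 1))‖ < 1 ∧
    IsUnit (1 + ∑' n : ℕ, E ((a * b) ^ (n + 1))) ∧
    ((∃ c ∈ B, gA E a b * c = 1 ∧ c * gA E a b = 1) ↔ (∃ c ∈ B, b * c = 1 ∧ c * b = 1)) :=
  stmt6_general B hB E hrange hfix hnorm a b hb
end

section
/- For every r ∈ ℕ, a ∈ A and b ∈ B one has Σ_{j=1}^r (−1)^{j+1} Σ_{n₁+⋯+n_j = r, nᵢ ≥ 1} Σ_{π ∈ NC(r), π ≤ 1_{n₁} ⊔ ⋯ ⊔ 1_{n_j}} κ^B_π((ba)^{⊗r}) = Σ_{π ∈ NC(r), 1 ∼_π r} κ^B_π((ba)^{⊗r}), i.e. the alternating sum over concatenation-bounded non-crossing partitions equals the sum over irreducible non-crossing partitions. -/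
/-- `i` and `j` lie in the same block of the partition `P`. -/
def SameBlock {r : ℕ} (P : Finset (Finset (Fin r))) (i j : Fin r) : Prop :=
  ∃ t ∈ P, i ∈ t ∧ j ∈ t

/-- `P` is a non-crossing partition of `{1, …, r}` (here `Fin r`). -/
def IsNC {r : ℕ} (P : Finset (Finset (Fin r))) : Prop :=
  (∅ ∉ P) ∧ (∀ i : Fin r, ∃! t : Finset (Fin r), t ∈ P ∧ i ∈ t) ∧
    ∀ i j k l : Fin r, i < j → j < k → k < l →
      SameBlock P i k → SameBlock P j l → SameBlock P i j

open scoped Classical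

theorem index_mono' {n : ℕ} (c : Composition n) {i k : Fin n} (h : i ≤ k) :
    c.index i ≤ c.index k := by
  have hk := Nat.find_spec (c.index_exists k.2)
  have : (c.index i : ℕ) ≤ (c.index k : ℕ) :=
    Nat.find_min' _ ⟨lt_of_le_of_lt h hk.1, hk.2⟩
  exact this

theorem index_consec {n : ℕ} (c : Composition n) (i : ℕ) (h1 : i + 1 < n) :
    c.index ⟨i, by omega⟩ = c.index ⟨i + 1, h1⟩ ↔
      ¬ ∃ l, l ≤ c.length ∧ c.sizeUpTo l = i + 1 := by
  set j : Fin n := ⟨i, by omega⟩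
  set j' : Fin n := ⟨i + 1, h1⟩
  have hj1 : c.sizeUpTo (c.index j) ≤ i := c.sizeUpTo_index_le j
  have hj2 : i < c.sizeUpTo ((c.index j : ℕ) + 1) := by
    simpa using c.lt_sizeUpTo_index_succ j
  constructor
  · rintro heq ⟨l, hl, hsz⟩
    have h3 : i + 1 < c.sizeUpTo ((c.index j : ℕ) + 1) := by
      have := c.lt_sizeUpTo_index_succ j'
      simp only [Fin.val_succ] at this
      rw [heq]; simpa using this
    have hlgt : (c.index j : ℕ) < l := by
      by_contra hle
      push_neg at hle
      have := c.monotone_sizeUpTo hle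
      omega
    have := c.monotone_sizeUpTo (show (c.index j : ℕ) + 1 ≤ l by omega)
    omega
  · intro hnb
    have h3 : i + 1 < c.sizeUpTo ((c.index j : ℕ) + 1) := by
      rcases Nat.lt_or_ge (i+1) (c.sizeUpTo ((c.index j : ℕ) + 1)) with h | h
      · exact h
      · exfalso
        exact hnb ⟨(c.index j : ℕ) + 1, by omega, by omega⟩
    have hle : c.index j' ≤ c.index j := by
      have : (c.index j' : ℕ) ≤ (c.index j : ℕ) :=
        Nat.find_min' _ ⟨h3, (c.index j).2⟩
      exact this
    exact le_antisymm (index_mono' c (by simp [j, j', Fin.le_def])) hle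

noncomputable def Ecomp (n : ℕ) : Composition n ≃ Finset (Fin (n - 1)) :=
  (compositionEquiv n).trans (compositionAsSetEquiv n)

theorem mem_Ecomp {n : ℕ} (c : Composition n) (s : Fin (n - 1)) :
    s ∈ Ecomp n c ↔ ∃ l, l ≤ c.length ∧ c.sizeUpTo l = s.val + 1 := by
  show s ∈ compositionAsSetEquiv n c.toCompositionAsSet ↔ _
  simp only [compositionAsSetEquiv, Equiv.coe_fn_mk, Set.mem_toFinset, Set.mem_setOf_eq]
  rw [show c.toCompositionAsSet.boundaries = c.boundaries from rfl]
  simp only [Composition.boundaries, Finset.mem_map, Finset.mem_univ, true_and]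
  constructor
  · rintro ⟨l, hl⟩
    refine ⟨(l : ℕ), by omega, ?_⟩
    have : (c.boundary.toEmbedding l : ℕ) = 1 + (s : ℕ) := by rw [hl]
    simpa [Composition.boundary, add_comm] using this
  · rintro ⟨l, hl, hsz⟩
    refine ⟨⟨l, by omega⟩, ?_⟩
    · apply Fin.ext
      show (c.boundary ⟨l, by omega⟩ : ℕ) = 1 + (s : ℕ)
      simp [Composition.boundary, Composition.sizeUpTo] at hsz ⊢
      omega

theorem Ecomp_card {n : ℕ} (hn : 0 < n) (c : Composition n) :
    (Ecomp n c).card + 1 = c.length := by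
  have hlen : 0 < c.length := c.length_pos_of_pos hn
  have hcard : (Finset.Ico 1 c.length).card = (Ecomp n c).card := by
    apply Finset.card_bij (fun l hl => (⟨c.sizeUpTo l - 1, by
      have hl' := Finset.mem_Ico.1 hl
      have h1 : c.sizeUpTo 0 < c.sizeUpTo 1 := c.sizeUpTo_strict_mono (by omega)
      have h2 : c.sizeUpTo 1 ≤ c.sizeUpTo l := c.monotone_sizeUpTo hl'.1
      have h3 : c.sizeUpTo l < c.sizeUpTo (l + 1) := c.sizeUpTo_strict_mono hl'.2
      have h4 : c.sizeUpTo (l+1) ≤ c.sizeUpTo c.length := c.monotone_sizeUpTo (by omega)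
      have h5 : c.sizeUpTo c.length = n := c.sizeUpTo_length
      have h0 : c.sizeUpTo 0 = 0 := c.sizeUpTo_zero
      omega⟩ : Fin (n - 1)))
    · intro l hl
      have hl' := Finset.mem_Ico.1 hl
      rw [mem_Ecomp]
      refine ⟨l, by omega, ?_⟩
      have h1 : c.sizeUpTo 0 < c.sizeUpTo 1 := c.sizeUpTo_strict_mono (by omega)
      have h2 : c.sizeUpTo 1 ≤ c.sizeUpTo l := c.monotone_sizeUpTo hl'.1
      have h0 : c.sizeUpTo 0 = 0 := c.sizeUpTo_zero
      simp only []
      omega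
    · intro l1 h1 l2 h2 heq
      have h1' := Finset.mem_Ico.1 h1
      have h2' := Finset.mem_Ico.1 h2
      have hv : c.sizeUpTo l1 - 1 = c.sizeUpTo l2 - 1 := congrArg Fin.val heq
      have e0 : c.sizeUpTo 0 < c.sizeUpTo 1 := c.sizeUpTo_strict_mono (by omega)
      have e1 : c.sizeUpTo 1 ≤ c.sizeUpTo l1 := c.monotone_sizeUpTo h1'.1
      have e2 : c.sizeUpTo 1 ≤ c.sizeUpTo l2 := c.monotone_sizeUpTo h2'.1
      have h0 : c.sizeUpTo 0 = 0 := c.sizeUpTo_zero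
      rcases lt_trichotomy l1 l2 with h | h | h
      · exfalso
        have := c.sizeUpTo_strict_mono h1'.2
        have := c.monotone_sizeUpTo (show l1 + 1 ≤ l2 by omega)
        omega
      · exact h
      · exfalso
        have := c.sizeUpTo_strict_mono h2'.2
        have := c.monotone_sizeUpTo (show l2 + 1 ≤ l1 by omega)
        omega
    · intro s hs
      rw [mem_Ecomp] at hs
      obtain ⟨l, hl, hsz⟩ := hs
      have hs2 : (s : ℕ) < n - 1 := s.2
      have hl0 : l ≠ 0 := by
        intro h; rw [h, c.sizeUpTo_zero] at hsz; omega
      have hll : l ≠ c.length := by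
        intro h; rw [h, c.sizeUpTo_length] at hsz; omega
      refine ⟨l, Finset.mem_Ico.2 ⟨by omega, by omega⟩, ?_⟩
      apply Fin.ext
      simp only []
      omega
  rw [← hcard, Nat.card_Ico]
  omega

section
variable {n : ℕ}

theorem Ecomp_consec (c : Composition n) (s : Fin (n - 1)) :
    s ∉ Ecomp n c ↔
      c.index ⟨s.val, by omega⟩ = c.index ⟨s.val + 1, by omega⟩ := by
  rw [index_consec c s.val (by omega), mem_Ecomp]

theorem index_eq_iff (c : Composition n) {i k : Fin n} (h : i ≤ k) :
    c.index i = c.index k ↔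
      ∀ s : Fin (n - 1), i.val ≤ s.val → s.val < k.val → s ∉ Ecomp n c := by
  constructor
  · intro heq s hs1 hs2
    rw [Ecomp_consec]
    have hsn : s.val + 1 < n := by omega
    have m1 : c.index i ≤ c.index ⟨s.val, by omega⟩ := index_mono' c (by simp [Fin.le_def, hs1])
    have m2 : c.index ⟨s.val, by omega⟩ ≤ c.index ⟨s.val + 1, hsn⟩ :=
      index_mono' c (by simp [Fin.le_def])
    have m3 : c.index ⟨s.val + 1, hsn⟩ ≤ c.index k := index_mono' c (by simp [Fin.le_def]; omega)
    rw [heq] at m1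
    exact le_antisymm m2 (m3.trans m1)
  · intro hnb
    obtain ⟨d, hd⟩ : ∃ d, k.val = i.val + d := ⟨k.val - i.val, by omega⟩
    clear h
    induction d generalizing k with
    | zero =>
      have : i = k := Fin.ext (by omega)
      rw [this]
    | succ d ih =>
      have hk' : i.val + d < n := by omega
      have e1 : c.index i = c.index ⟨i.val + d, hk'⟩ :=
        ih (k := ⟨i.val + d, hk'⟩) (fun s h1 h2 => hnb s h1 (by simp at h2 ⊢; omega)) rfl
      have hs : i.val + d < n - 1 := by omega
      have e2 : c.index ⟨i.val + d, hk'⟩ = c.index ⟨i.val + d + 1, by omega⟩ := by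
        rw [← Ecomp_consec c ⟨i.val + d, hs⟩]
        exact hnb ⟨i.val + d, hs⟩ (by simp) (by simp; omega)
      have hk : (⟨i.val + d + 1, by omega⟩ : Fin n) = k := Fin.ext (by simp; omega)
      rw [e1, e2, hk]
end

noncomputable def FP {r : ℕ} (P : Finset (Finset (Fin r))) : Finset (Fin (r - 1)) :=
  Finset.univ.filter (fun s => ∃ t ∈ P, ∃ i ∈ t, ∃ k ∈ t, i.val ≤ s.val ∧ s.val < k.val)

theorem compat_iff {r : ℕ} (c : Composition r) (P : Finset (Finset (Fin r))) :
    (∀ t ∈ P, ∀ i ∈ t, ∀ k ∈ t, c.index i = c.index k) ↔ Ecomp r c ⊆ (FP P)ᶜ := by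
  constructor
  · intro h s hs
    rw [Finset.mem_compl, FP, Finset.mem_filter]
    rintro ⟨-, t, ht, i, hi, k, hk, h1, h2⟩
    have hik : i ≤ k := by rw [Fin.le_def]; omega
    exact ((index_eq_iff c hik).1 (h t ht i hi k hk) s h1 h2) hs
  · intro h t ht i hi k hk
    have key : ∀ i' k' : Fin r, i' ∈ t → k' ∈ t → i' ≤ k' → c.index i' = c.index k' := by
      intro i' k' hi' hk' hle
      rw [index_eq_iff c hle]
      intro s h1 h2 hs
      have := h hs
      rw [Finset.mem_compl, FP, Finset.mem_filter] at this
      exact this ⟨Finset.mem_univ s, t, ht, i', hi', k', hk', h1, h2⟩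
    rcases le_total i k with hle | hle
    · exact key i k hi hk hle
    · exact (key k i hk hi hle).symm

theorem FP_univ_iff {r : ℕ} (hr : 0 < r) (P : Finset (Finset (Fin r))) (hP : IsNC P) :
    SameBlock P ⟨0, hr⟩ ⟨r - 1, Nat.sub_lt hr one_pos⟩ ↔ FP P = Finset.univ := by
  obtain ⟨hne, huniq, hnc⟩ := hP
  constructor
  · rintro ⟨t, ht, h0, h1⟩
    apply Finset.eq_univ_of_forall
    intro s
    rw [FP, Finset.mem_filter]
    exact ⟨Finset.mem_univ s, t, ht, ⟨0, hr⟩, h0, ⟨r - 1, Nat.sub_lt hr one_pos⟩, h1,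
      by simp, by simpa using s.2⟩
  · intro hF
    by_contra hSB
    -- V : block of 0
    obtain ⟨V, ⟨hVP, h0V⟩, hVuniq⟩ := huniq ⟨0, hr⟩
    have hVne : V.Nonempty := ⟨_, h0V⟩
    set M := V.max' hVne with hM
    have hMV : M ∈ V := V.max'_mem hVne
    have hMlt : M.val < r - 1 := by
      rcases Nat.lt_or_ge M.val (r - 1) with h | h
      · exact h
      · exfalso
        have : M = ⟨r - 1, Nat.sub_lt hr one_pos⟩ := Fin.ext (show M.val = r - 1 by have := M.isLt; omega)
        exact hSB ⟨V, hVP, h0V, this ▸ hMV⟩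
    -- claim: s := M.val is not in FP P
    have : (⟨M.val, hMlt⟩ : Fin (r - 1)) ∈ FP P := hF ▸ Finset.mem_univ _
    rw [FP, Finset.mem_filter] at this
    obtain ⟨-, t, ht, i, hi, k, hk, h1, h2⟩ := this
    have h1 : i.val ≤ M.val := h1
    have h2 : M.val < k.val := h2
    -- i ≤ M < k, all in block t
    have huniq_at : ∀ (x : Fin r) (u : Finset (Fin r)), u ∈ P → x ∈ u → x ∈ V → u = V := by
      intro x u hu hxu hxV
      obtain ⟨w, -, hw⟩ := huniq x
      rw [hw u ⟨hu, hxu⟩, ← hw V ⟨hVP, hxV⟩]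
    have hkM : M < k := by rw [Fin.lt_def]; omega
    have hiV : i ∈ V := by
      rcases Nat.eq_zero_or_pos i.val with h0 | hpos
      · have : i = ⟨0, hr⟩ := Fin.ext h0
        rw [this]; exact h0V
      · rcases Nat.lt_or_ge i.val M.val with hlt | hge
        · -- 0 < i < M < k : use non-crossing
          have hsb : SameBlock P ⟨0, hr⟩ i :=
            hnc ⟨0, hr⟩ i M k (by rw [Fin.lt_def]; simpa using hpos) (by rwa [Fin.lt_def]) hkM
              ⟨V, hVP, h0V, hMV⟩ ⟨t, ht, hi, hk⟩
          obtain ⟨u, hu, h0u, hiu⟩ := hsb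
          have : u = V := huniq_at ⟨0, hr⟩ u hu h0u h0V
          rwa [← this]
        · have : i = M := Fin.ext (by omega)
          rw [this]; exact hMV
    have htV : t = V := huniq_at i t ht hi hiV
    have : k ≤ M := V.le_max' k (htV ▸ hk)
    exact absurd hkM (not_lt.2 this)

theorem key_sum {r : ℕ} (hr : 0 < r) (P : Finset (Finset (Fin r))) (hP : IsNC P) :
    (∑ c ∈ Finset.univ.filter
        (fun c : Composition r => ∀ t ∈ P, ∀ i ∈ t, ∀ k ∈ t, c.index i = c.index k),
      ((-1 : ℤ) ^ (c.length + 1)))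
    = if SameBlock P ⟨0, hr⟩ ⟨r - 1, Nat.sub_lt hr one_pos⟩ then 1 else 0 := by
  have step : (∑ c ∈ Finset.univ.filter
        (fun c : Composition r => ∀ t ∈ P, ∀ i ∈ t, ∀ k ∈ t, c.index i = c.index k),
      ((-1 : ℤ) ^ (c.length + 1)))
      = ∑ D ∈ ((FP P)ᶜ).powerset, (-1 : ℤ) ^ D.card := by
    apply Finset.sum_equiv (Ecomp r)
    · intro c
      simp only [Finset.mem_filter, Finset.mem_univ, true_and, Finset.mem_powerset]
      exact compat_iff c P
    · intro c hc
      have hl : (Ecomp r c).card + 1 = c.length := Ecomp_card hr c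
      rw [← hl]
      rw [pow_add, pow_add]
      ring
  rw [step, Finset.sum_powerset_neg_one_pow_card]
  by_cases h : SameBlock P ⟨0, hr⟩ ⟨r - 1, Nat.sub_lt hr one_pos⟩
  · rw [if_pos h, if_pos]
    rw [Finset.compl_eq_empty_iff]
    exact (FP_univ_iff hr P hP).1 h
  · rw [if_neg h, if_neg]
    intro hc
    rw [Finset.compl_eq_empty_iff] at hc
    exact h ((FP_univ_iff hr P hP).2 hc)

open scoped Classical in
/-- Lemma 3.1: the alternating sum over concatenation-bounded non-crossing partitions equals
the sum over irreducible non-crossing partitions, for any family `κ` satisfying the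
moment-cumulant relations (`hmc`) and multiplicativity over concatenations (`hconcat`). -/
theorem stmt9 {A : Type*} [NormedRing A] [NormedAlgebra ℂ A] [CompleteSpace A]
    (B : Subalgebra ℂ A) (hB : IsClosed (B : Set A))
    (E : A →L[ℂ] A) (hrange : ∀ x : A, E x ∈ B) (hfix : ∀ x ∈ B, E x = x)
    (hnorm : ∀ x : A, ‖E x‖ ≤ ‖x‖)
    (hbimod : ∀ b₁ ∈ B, ∀ b₂ ∈ B, ∀ x : A, E (b₁ * x * b₂) = b₁ * E x * b₂)
    (κ : (r : ℕ) → Finset (Finset (Fin r)) → (Fin r → A) → A)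
    (hmc : ∀ (r : ℕ) (x : Fin r → A),
      E (List.ofFn x).prod =
        ∑ P ∈ Finset.univ.filter (fun P : Finset (Finset (Fin r)) => IsNC P), κ r P x)
    (hconcat : ∀ (m n : ℕ) (P : Finset (Finset (Fin m))) (Q : Finset (Finset (Fin n))),
      IsNC P → IsNC Q → ∀ x : Fin (m + n) → A,
        κ (m + n)
          ((P.image fun t => t.image (Fin.castAdd n)) ∪
            (Q.image fun t => t.image (Fin.natAdd m))) x =
        κ m P (fun i => x (Fin.castAdd n i)) * κ n Q (fun i => x (Fin.natAdd m i)))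
    (r : ℕ) (hr : 0 < r) (a : A) (b : A) (hbB : b ∈ B) :
    ∑ j ∈ Finset.Icc 1 r, ((-1 : ℤ) ^ (j + 1)) •
      ∑ c ∈ Finset.univ.filter (fun c : Composition r => c.length = j),
        ∑ P ∈ Finset.univ.filter (fun P : Finset (Finset (Fin r)) =>
            IsNC P ∧ ∀ t ∈ P, ∀ i ∈ t, ∀ k ∈ t, c.index i = c.index k),
          κ r P (fun _ => b * a)
    = ∑ P ∈ Finset.univ.filter (fun P : Finset (Finset (Fin r)) =>
          IsNC P ∧ SameBlock P ⟨0, hr⟩ ⟨r - 1, Nat.sub_lt hr one_pos⟩),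
        κ r P (fun _ => b * a) := by
  set κP : Finset (Finset (Fin r)) → A := fun P => κ r P (fun _ => b * a) with hκP
  set g : Composition r → A := fun c =>
    ∑ P ∈ Finset.univ.filter (fun P : Finset (Finset (Fin r)) =>
        IsNC P ∧ ∀ t ∈ P, ∀ i ∈ t, ∀ k ∈ t, c.index i = c.index k), κP P with hg
  have step1 : (∑ j ∈ Finset.Icc 1 r, ((-1 : ℤ) ^ (j + 1)) •
      ∑ c ∈ Finset.univ.filter (fun c : Composition r => c.length = j), g c)
      = ∑ c : Composition r, ((-1 : ℤ) ^ (c.length + 1)) • g c := by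
    rw [← Finset.sum_fiberwise_of_maps_to (g := fun c : Composition r => c.length)
      (t := Finset.Icc 1 r) (fun c _ => Finset.mem_Icc.2
        ⟨c.length_pos_of_pos hr, c.length_le⟩)]
    apply Finset.sum_congr rfl
    intro j hj
    rw [Finset.smul_sum]
    apply Finset.sum_congr rfl
    intro c hc
    rw [Finset.mem_filter] at hc
    rw [hc.2]
  rw [step1]
  have step2 : ∀ c : Composition r, ((-1 : ℤ) ^ (c.length + 1)) • g c
      = ∑ P ∈ Finset.univ.filter (fun P : Finset (Finset (Fin r)) => IsNC P),
          (if (∀ t ∈ P, ∀ i ∈ t, ∀ k ∈ t, c.index i = c.index k)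
            then ((-1 : ℤ) ^ (c.length + 1)) • κP P else 0) := by
    intro c
    rw [hg]
    simp only []
    rw [← Finset.filter_filter, Finset.sum_filter, Finset.smul_sum]
    apply Finset.sum_congr rfl
    intro P hP
    split_ifs <;> simp
  simp only [step2]
  rw [Finset.sum_comm]
  have step3 : ∀ P ∈ Finset.univ.filter (fun P : Finset (Finset (Fin r)) => IsNC P),
      (∑ c : Composition r,
        (if (∀ t ∈ P, ∀ i ∈ t, ∀ k ∈ t, c.index i = c.index k)
          then ((-1 : ℤ) ^ (c.length + 1)) • κP P else 0))
      = if SameBlock P ⟨0, hr⟩ ⟨r - 1, Nat.sub_lt hr one_pos⟩ then κP P else 0 := by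
    intro P hP
    rw [Finset.mem_filter] at hP
    rw [← Finset.sum_filter, ← Finset.sum_smul, key_sum hr P hP.2]
    split_ifs <;> simp
  rw [Finset.sum_congr rfl step3, ← Finset.sum_filter, Finset.filter_filter]
end

section
/- For b invertible in B with g_a(b) invertible and norms in the appropriate range, the R-transform satisfies R_a(g_a(b)) = E(a(1−ba)⁻¹)·(E((1−ba)⁻¹))⁻¹. In particular the right-hand side extends R_a∘g_a to non-invertible b with ‖b‖ < 1/(2‖a‖). -/
namespace Ring

variable {R : Type*} [Ring R]

theorem mul_inverse_one_sub_mul {a b : R} (hab : IsUnit (1 - a * b))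
    (hba : IsUnit (1 - b * a)) :
    b * inverse (1 - a * b) = inverse (1 - b * a) * b := by
  have push : (1 - b * a) * b = b * (1 - a * b) := by noncomm_ring
  calc b * inverse (1 - a * b)
      = inverse (1 - b * a) * ((1 - b * a) * b) * inverse (1 - a * b) := by
        rw [← mul_assoc, inverse_mul_cancel _ hba, one_mul]
    _ = inverse (1 - b * a) * b * ((1 - a * b) * inverse (1 - a * b)) := by
        rw [push]; noncomm_ring
    _ = inverse (1 - b * a) * b := by rw [mul_inverse_cancel _ hab, mul_one]

theorem inverse_one_sub_sub_one {x : R} (h : IsUnit (1 - x)) :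
    inverse (1 - x) - 1 = x * inverse (1 - x) := by
  have h1 : (1 - x) * inverse (1 - x) = 1 := mul_inverse_cancel _ h
  rw [sub_mul, one_mul] at h1
  calc inverse (1 - x) - 1 = inverse (1 - x) - (inverse (1 - x) - x * inverse (1 - x)) := by
        rw [h1]
    _ = x * inverse (1 - x) := sub_sub_cancel _ _

theorem inverse_sub_inverse_mul {b F : R} (hb : IsUnit b) (hF : IsUnit F) :
    inverse b - inverse (F * b) = inverse b * (F - 1) * inverse F := by
  obtain ⟨u, rfl⟩ := hb
  obtain ⟨v, rfl⟩ := hF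
  rw [← Units.val_mul, inverse_unit, inverse_unit, inverse_unit, mul_inv_rev, Units.val_mul,
    mul_sub, sub_mul, mul_assoc, Units.mul_inv, mul_one]

theorem map_inverse_one_sub_mul_sub_one {F : Type*} [FunLike F R R]
    [AddMonoidHomClass F R R] {E : F} {a b : R} (hE1 : E 1 = 1)
    (hleft : ∀ x, E (b * x) = b * E x) (hba : IsUnit (1 - b * a)) :
    E (inverse (1 - b * a)) - 1 = b * E (a * inverse (1 - b * a)) := by
  rw [← hleft, ← mul_assoc, ← inverse_one_sub_sub_one hba, map_sub, hE1]

end Ring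

theorem gA_eq_mul {A : Type*} [NormedRing A] [NormedAlgebra ℂ A] [CompleteSpace A]
    {E : A →L[ℂ] A} {a b : A} (hleft : ∀ x, E (b * x) = b * E x)
    (hright : ∀ x, E (x * b) = E x * b) (hab : IsUnit (1 - a * b))
    (hba : IsUnit (1 - b * a)) :
    gA E a b = E (Ring.inverse (1 - b * a)) * b := by
  rw [gA, ← hleft, Ring.mul_inverse_one_sub_mul hab hba, hright]

theorem stmt10_general {A : Type*} [NormedRing A] [NormedAlgebra ℂ A] [CompleteSpace A]
    (B : Subalgebra ℂ A)
    (E : A →L[ℂ] A) (hfix : ∀ x ∈ B, E x = x)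
    (hbimod : ∀ b₁ ∈ B, ∀ b₂ ∈ B, ∀ x : A, E (b₁ * x * b₂) = b₁ * E x * b₂)
    (a : A) (ha : a ≠ 0) (b : A) (hbB : b ∈ B) (hb : ‖b‖ < 1 / (2 * ‖a‖))
    (hbinv : ∃ c ∈ B, b * c = 1 ∧ c * b = 1)
    (hginv : ∃ c ∈ B, gA E a b * c = 1 ∧ c * gA E a b = 1) :
    Ring.inverse b - Ring.inverse (gA E a b) =
      E (a * Ring.inverse (1 - b * a)) * Ring.inverse (E (Ring.inverse (1 - b * a))) := by
  have hnorm : ‖a‖ * ‖b‖ < 1 :=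
    calc ‖a‖ * ‖b‖ < ‖a‖ * (1 / (2 * ‖a‖)) := mul_lt_mul_of_pos_left hb (norm_pos_iff.2 ha)
      _ = 1 / 2 := by field_simp [norm_ne_zero_iff.2 ha]
      _ < 1 := by norm_num
  have hab : IsUnit (1 - a * b) :=
    isUnit_one_sub_of_norm_lt_one ((norm_mul_le a b).trans_lt hnorm)
  have hba : IsUnit (1 - b * a) :=
    isUnit_one_sub_of_norm_lt_one ((norm_mul_le b a).trans_lt (by rwa [mul_comm]))
  have hbu : IsUnit b := isUnit_iff_exists.2 (hbinv.imp fun _ ↦ And.right)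
  have hleft : ∀ x, E (b * x) = b * E x := fun x ↦ by simpa using hbimod b hbB 1 B.one_mem x
  have hright : ∀ x, E (x * b) = E x * b := fun x ↦ by simpa using hbimod 1 B.one_mem b hbB x
  have hg := gA_eq_mul hleft hright hab hba
  have hFu : IsUnit (E (Ring.inverse (1 - b * a))) := by
    have hgu : IsUnit (gA E a b) := isUnit_iff_exists.2 (hginv.imp fun _ ↦ And.right)
    rw [hg] at hgu
    exact hbu.mul_right_iff.1 hgu
  rw [hg, Ring.inverse_sub_inverse_mul hbu hFu,
    Ring.map_inverse_one_sub_mul_sub_one (hfix 1 B.one_mem) hleft hba,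
    ← mul_assoc, Ring.inverse_mul_cancel _ hbu, one_mul]

/-- For invertible `b`, `R_a(g_a(b)) = b⁻¹ - g_a(b)⁻¹` equals
`E(a(1-ba)⁻¹) ⬝ (E((1-ba)⁻¹))⁻¹`, which makes sense even for non-invertible `b`. -/
theorem stmt10 {A : Type*} [NormedRing A] [NormedAlgebra ℂ A] [CompleteSpace A]
    (B : Subalgebra ℂ A) (hB : IsClosed (B : Set A))
    (E : A →L[ℂ] A) (hrange : ∀ x : A, E x ∈ B) (hfix : ∀ x ∈ B, E x = x)
    (hnorm : ∀ x : A, ‖E x‖ ≤ ‖x‖)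
    (hbimod : ∀ b₁ ∈ B, ∀ b₂ ∈ B, ∀ x : A, E (b₁ * x * b₂) = b₁ * E x * b₂)
    (a : A) (ha : a ≠ 0) (b : A) (hbB : b ∈ B) (hb : ‖b‖ < 1 / (2 * ‖a‖))
    (hbinv : ∃ c ∈ B, b * c = 1 ∧ c * b = 1)
    (hginv : ∃ c ∈ B, gA E a b * c = 1 ∧ c * gA E a b = 1) :
    Ring.inverse b - Ring.inverse (gA E a b) =
      E (a * Ring.inverse (1 - b * a)) * Ring.inverse (E (Ring.inverse (1 - b * a))) :=
  stmt10_general B E hfix hbimod a ha b hbB hb hbinv hginv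
end

section
/- With Ψ_a(b) = Σ_{n≥1} E((ba)ⁿ) = E((1−ba)⁻¹) − 1 and E(a) invertible in B, the map Ψ_a is injective on B(0, 1/(4‖a‖²‖E(a)⁻¹‖)). -/
/-- `Ψ_a(b) = E((1 - ba)⁻¹) - 1`. -/
noncomputable def PsiA {A : Type*} [NormedRing A] [NormedAlgebra ℂ A] [CompleteSpace A]
    (E : A →L[ℂ] A) (a b : A) : A :=
  E (Ring.inverse (1 - b * a)) - 1

set_option maxHeartbeats 1000000 in
private lemma contr_aux (M K β₁ β₂ δ : ℝ) (hδ : 0 < δ)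
    (h1 : β₁ * (4 * M ^ 2 * K) * δ < 1 * δ) (h2 : β₂ * (4 * M ^ 2 * K) * δ < 1 * δ)
    (hc : δ ≤ (β₂ * ((16/9) * (M * δ) * M) + δ * ((4/3) * (M * β₁) * M)) * K) : False := by
  nlinarith [h1, h2, hc]

theorem stmt12 {A : Type*} [NormedRing A] [NormedAlgebra ℂ A] [CompleteSpace A]
    (B : Subalgebra ℂ A) (hB : IsClosed (B : Set A))
    (E : A →L[ℂ] A) (hrange : ∀ x : A, E x ∈ B) (hfix : ∀ x ∈ B, E x = x)
    (hnorm : ∀ x : A, ‖E x‖ ≤ ‖x‖)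
    (hbimod : ∀ b₁ ∈ B, ∀ b₂ ∈ B, ∀ x : A, E (b₁ * x * b₂) = b₁ * E x * b₂)
    (a : A) (hEa : ∃ c ∈ B, E a * c = 1 ∧ c * E a = 1)
    (b₁ b₂ : A) (hb₁B : b₁ ∈ B) (hb₂B : b₂ ∈ B)
    (hb₁ : ‖b₁‖ < 1 / (4 * ‖a‖ ^ 2 * ‖Ring.inverse (E a)‖))
    (hb₂ : ‖b₂‖ < 1 / (4 * ‖a‖ ^ 2 * ‖Ring.inverse (E a)‖))
    (heq : PsiA E a b₁ = PsiA E a b₂) :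
    b₁ = b₂ := by
  rcases subsingleton_or_nontrivial A with hA | hA
  · exact Subsingleton.elim _ _
  obtain ⟨c, hcB, hc1, hc2⟩ := hEa
  have hRinv : Ring.inverse (E a) = c := Ring.inverse_unit ⟨E a, c, hc1, hc2⟩
  have ha : a ≠ 0 := by
    rintro rfl
    rw [map_zero, zero_mul] at hc1
    exact zero_ne_one hc1
  have hM : (0 : ℝ) < ‖a‖ := norm_pos_iff.mpr ha
  have hMK : (1 : ℝ) ≤ ‖a‖ * ‖c‖ := by
    calc (1 : ℝ) ≤ ‖(1 : A)‖ := one_le_norm_one A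
    _ = ‖E a * c‖ := by rw [hc1]
    _ ≤ ‖E a‖ * ‖c‖ := norm_mul_le _ _
    _ ≤ ‖a‖ * ‖c‖ := mul_le_mul_of_nonneg_right (hnorm a) (norm_nonneg c)
  have hK : (0 : ℝ) < ‖c‖ := by nlinarith [norm_nonneg c]
  have hP : (0 : ℝ) < 4 * ‖a‖ ^ 2 * ‖c‖ := by positivity
  rw [hRinv] at hb₁ hb₂
  have hb₁' : ‖b₁‖ * (4 * ‖a‖ ^ 2 * ‖c‖) < 1 := (lt_div_iff₀ hP).mp hb₁
  have hb₂' : ‖b₂‖ * (4 * ‖a‖ ^ 2 * ‖c‖) < 1 := (lt_div_iff₀ hP).mp hb₂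
  -- smallness of products
  have key4 : ∀ b : A, ‖b‖ * (4 * ‖a‖ ^ 2 * ‖c‖) < 1 → 4 * (‖a‖ * ‖b‖) < 1 := by
    intro b hb
    nlinarith [norm_nonneg b, mul_nonneg (norm_nonneg a) (norm_nonneg b), hM, hMK,
      mul_le_mul_of_nonneg_left hMK (mul_nonneg (mul_nonneg (by norm_num : (0:ℝ) ≤ 4) (norm_nonneg a)) (norm_nonneg b))]
  have hz₁4 : 4 * (‖a‖ * ‖b₁‖) < 1 := key4 b₁ hb₁'
  have hz₂4 : 4 * (‖a‖ * ‖b₂‖) < 1 := key4 b₂ hb₂'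
  have hzn₁ : ‖a * b₁‖ ≤ ‖a‖ * ‖b₁‖ := norm_mul_le _ _
  have hzn₂ : ‖a * b₂‖ ≤ ‖a‖ * ‖b₂‖ := norm_mul_le _ _
  have hxn₁ : ‖b₁ * a‖ ≤ ‖a‖ * ‖b₁‖ := le_of_le_of_eq (norm_mul_le _ _) (mul_comm _ _)
  have hxn₂ : ‖b₂ * a‖ ≤ ‖a‖ * ‖b₂‖ := le_of_le_of_eq (norm_mul_le _ _) (mul_comm _ _)
  have hz₁ : ‖a * b₁‖ < 1 := by linarith
  have hz₂ : ‖a * b₂‖ < 1 := by linarith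
  have hx₁ : ‖b₁ * a‖ < 1 := by linarith
  have hx₂ : ‖b₂ * a‖ < 1 := by linarith
  -- units
  have hvz₁ : IsUnit (1 - a * b₁) := isUnit_one_sub_of_norm_lt_one hz₁
  have hvz₂ : IsUnit (1 - a * b₂) := isUnit_one_sub_of_norm_lt_one hz₂
  have hvx₁ : IsUnit (1 - b₁ * a) := isUnit_one_sub_of_norm_lt_one hx₁
  have hvx₂ : IsUnit (1 - b₂ * a) := isUnit_one_sub_of_norm_lt_one hx₂
  set I₁ := Ring.inverse (1 - a * b₁) with hI₁def
  set I₂ := Ring.inverse (1 - a * b₂) with hI₂def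
  set y₁ := Ring.inverse (1 - b₁ * a) with hy₁def
  set y₂ := Ring.inverse (1 - b₂ * a) with hy₂def
  set w₁ := I₁ - 1 with hw₁def
  set w₂ := I₂ - 1 with hw₂def
  -- basic inverse identities
  have hI₁l : I₁ * (1 - a * b₁) = 1 := Ring.inverse_mul_cancel _ hvz₁
  have hI₁r : (1 - a * b₁) * I₁ = 1 := Ring.mul_inverse_cancel _ hvz₁
  have hI₂l : I₂ * (1 - a * b₂) = 1 := Ring.inverse_mul_cancel _ hvz₂
  have hI₂r : (1 - a * b₂) * I₂ = 1 := Ring.mul_inverse_cancel _ hvz₂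
  have hy₁l : (1 - b₁ * a) * y₁ = 1 := Ring.mul_inverse_cancel _ hvx₁
  have hy₂l : (1 - b₂ * a) * y₂ = 1 := Ring.mul_inverse_cancel _ hvx₂
  -- w = z + z * w
  have hwrec : ∀ (z I : A), (1 - z) * I = 1 → I - 1 = z + z * (I - 1) := by
    intro z I h
    have h2 : I - z * I = 1 := by rw [← h]; noncomm_ring
    have h3 : I = 1 + z * I := by rw [← h2]; noncomm_ring
    calc I - 1 = z * I := by conv_lhs => rw [h3, add_sub_cancel_left]
    _ = z + z * (I - 1) := by noncomm_ring
  have hw₁rec : w₁ = a * b₁ + a * b₁ * w₁ := hwrec _ _ hI₁r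
  have hw₂rec : w₂ = a * b₂ + a * b₂ * w₂ := hwrec _ _ hI₂r
  -- norm bounds on w
  have hwnorm : ∀ z w : A, w = z + z * w → ‖w‖ ≤ ‖z‖ + ‖z‖ * ‖w‖ := by
    intro z w h
    calc ‖w‖ = ‖z + z * w‖ := by rw [← h]
    _ ≤ ‖z‖ + ‖z * w‖ := norm_add_le _ _
    _ ≤ ‖z‖ + ‖z‖ * ‖w‖ := by linarith [norm_mul_le z w]
  have hw₁n : ‖w₁‖ ≤ ‖a * b₁‖ + ‖a * b₁‖ * ‖w₁‖ := hwnorm _ _ hw₁rec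
  have hw₂n : ‖w₂‖ ≤ ‖a * b₂‖ + ‖a * b₂‖ * ‖w₂‖ := hwnorm _ _ hw₂rec
  have hw₁b : 3 * ‖w₁‖ ≤ 4 * ‖a * b₁‖ := by nlinarith [norm_nonneg w₁, norm_nonneg (a*b₁)]
  have hw₂b : 3 * ‖w₂‖ ≤ 4 * ‖a * b₂‖ := by nlinarith [norm_nonneg w₂, norm_nonneg (a*b₂)]
  -- commutation : a * y = (1 + w) * a = I * a
  have hcomm : ∀ (b y I : A), (1 - b * a) * y = 1 → I * (1 - a * b) = 1 → a * y = I * a := by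
    intro b y I h1 h2
    have e1 : (1 - a * b) * (a * y) = a := by
      have : a * ((1 - b * a) * y) = a * 1 := by rw [h1]
      calc (1 - a * b) * (a * y) = a * ((1 - b * a) * y) := by noncomm_ring
      _ = a := by rw [h1, mul_one]
    calc a * y = (I * (1 - a * b)) * (a * y) := by rw [h2, one_mul]
    _ = I * ((1 - a * b) * (a * y)) := by rw [mul_assoc]
    _ = I * a := by rw [e1]
  have hcomm₁ : a * y₁ = I₁ * a := hcomm b₁ y₁ I₁ hy₁l hI₁l
  have hcomm₂ : a * y₂ = I₂ * a := hcomm b₂ y₂ I₂ hy₂l hI₂l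
  -- E(y) = 1 + b * (E a + E (w * a))
  have hleft : ∀ b : A, b ∈ B → ∀ t : A, E (b * t) = b * E t := by
    intro b hb t
    have := hbimod b hb 1 B.one_mem t
    simpa using this
  set F₁ := E (w₁ * a) with hF₁def
  set F₂ := E (w₂ * a) with hF₂def
  have hE1 : E 1 = 1 := hfix 1 B.one_mem
  have hEy : ∀ (b y I w : A), b ∈ B → (1 - b * a) * y = 1 → a * y = I * a → w = I - 1 →
      E y = 1 + b * (E a + E (w * a)) := by
    intro b y I w hb h1 h2 hw
    have hy : y = 1 + b * (a * y) := by
      have : y - b * a * y = 1 := by rw [← h1]; noncomm_ring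
      rw [← this]; noncomm_ring
    have hIa : I * a = a + w * a := by rw [hw]; noncomm_ring
    rw [hy, h2, hIa, map_add, hE1, hleft b hb, map_add]
  have hEy₁ : E y₁ = 1 + b₁ * (E a + F₁) := hEy b₁ y₁ I₁ w₁ hb₁B hy₁l hcomm₁ hw₁def
  have hEy₂ : E y₂ = 1 + b₂ * (E a + F₂) := hEy b₂ y₂ I₂ w₂ hb₂B hy₂l hcomm₂ hw₂def
  -- the main equation
  have heqB : b₁ * (E a + F₁) = b₂ * (E a + F₂) := by
    have h := heq
    unfold PsiA at h
    rw [← hy₁def, ← hy₂def, hEy₁, hEy₂] at h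
    have := sub_eq_zero.mpr h
    have h2 : b₁ * (E a + F₁) - b₂ * (E a + F₂) = 0 := by
      rw [← this]; noncomm_ring
    exact sub_eq_zero.mp h2
  have hkey : b₁ - b₂ = (b₂ * (F₂ - F₁) + (b₂ - b₁) * F₁) * c := by
    have h1 : (b₁ - b₂) * E a = b₂ * (F₂ - F₁) + (b₂ - b₁) * F₁ := by
      have h2 : (b₁ - b₂) * E a - (b₂ * (F₂ - F₁) + (b₂ - b₁) * F₁)
          = b₁ * (E a + F₁) - b₂ * (E a + F₂) := by noncomm_ring
      rw [heqB, sub_self] at h2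
      exact sub_eq_zero.mp h2
    calc b₁ - b₂ = ((b₁ - b₂) * E a) * c := by rw [mul_assoc, hc1, mul_one]
    _ = (b₂ * (F₂ - F₁) + (b₂ - b₁) * F₁) * c := by rw [h1]
  -- difference of w's
  have hdw : w₂ - w₁ = a * (b₂ - b₁) + w₂ * (a * (b₂ - b₁)) + (a * (b₂ - b₁)) * w₁
      + w₂ * (a * (b₂ - b₁)) * w₁ := by
    have h1 : I₂ - I₁ = I₂ * (a * b₂ - a * b₁) * I₁ := by
      calc I₂ - I₁ = I₂ * ((1 - a * b₁) * I₁) - (I₂ * (1 - a * b₂)) * I₁ := by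
            rw [hI₁r, hI₂l, mul_one, one_mul]
      _ = I₂ * (a * b₂ - a * b₁) * I₁ := by noncomm_ring
    have hI₁w : I₁ = 1 + w₁ := by rw [hw₁def]; abel
    have hI₂w : I₂ = 1 + w₂ := by rw [hw₂def]; abel
    calc w₂ - w₁ = I₂ - I₁ := by rw [hw₁def, hw₂def]; abel
    _ = I₂ * (a * b₂ - a * b₁) * I₁ := h1
    _ = (1 + w₂) * (a * (b₂ - b₁)) * (1 + w₁) := by rw [← hI₁w, ← hI₂w]; noncomm_ring
    _ = a * (b₂ - b₁) + w₂ * (a * (b₂ - b₁)) + (a * (b₂ - b₁)) * w₁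
        + w₂ * (a * (b₂ - b₁)) * w₁ := by noncomm_ring
  -- now norm estimates
  have hΔz : ‖a * (b₂ - b₁)‖ ≤ ‖a‖ * ‖b₂ - b₁‖ := norm_mul_le _ _
  have hδnn : (0:ℝ) ≤ ‖b₂ - b₁‖ := norm_nonneg _
  have hΔw : ‖w₂ - w₁‖ ≤ ‖a‖ * ‖b₂ - b₁‖ + ‖w₂‖ * (‖a‖ * ‖b₂ - b₁‖)
      + (‖a‖ * ‖b₂ - b₁‖) * ‖w₁‖ + ‖w₂‖ * (‖a‖ * ‖b₂ - b₁‖) * ‖w₁‖ := by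
    rw [hdw]
    have n1 := norm_add_le (a * (b₂ - b₁) + w₂ * (a * (b₂ - b₁)) + (a * (b₂ - b₁)) * w₁)
      (w₂ * (a * (b₂ - b₁)) * w₁)
    have n2 := norm_add_le (a * (b₂ - b₁) + w₂ * (a * (b₂ - b₁))) ((a * (b₂ - b₁)) * w₁)
    have n3 := norm_add_le (a * (b₂ - b₁)) (w₂ * (a * (b₂ - b₁)))
    have m1 : ‖w₂ * (a * (b₂ - b₁))‖ ≤ ‖w₂‖ * (‖a‖ * ‖b₂ - b₁‖) :=
      le_trans (norm_mul_le _ _) (mul_le_mul_of_nonneg_left hΔz (norm_nonneg w₂))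
    have m2 : ‖(a * (b₂ - b₁)) * w₁‖ ≤ (‖a‖ * ‖b₂ - b₁‖) * ‖w₁‖ :=
      le_trans (norm_mul_le _ _) (mul_le_mul_of_nonneg_right hΔz (norm_nonneg w₁))
    have m3 : ‖w₂ * (a * (b₂ - b₁)) * w₁‖ ≤ ‖w₂‖ * (‖a‖ * ‖b₂ - b₁‖) * ‖w₁‖ :=
      le_trans (norm_mul_le _ _) (mul_le_mul_of_nonneg_right m1 (norm_nonneg w₁))
    linarith
  have hΔF : ‖F₂ - F₁‖ ≤ ‖w₂ - w₁‖ * ‖a‖ := by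
    have hF : F₂ - F₁ = E ((w₂ - w₁) * a) := by
      rw [hF₁def, hF₂def, ← map_sub]
      congr 1
      noncomm_ring
    rw [hF]
    exact le_trans (hnorm _) (norm_mul_le _ _)
  have hF₁n : ‖F₁‖ ≤ ‖w₁‖ * ‖a‖ := le_trans (hnorm _) (norm_mul_le _ _)
  -- final contraction estimate
  have hδfin : ‖b₂ - b₁‖ ≤ (‖b₂‖ * ‖F₂ - F₁‖ + ‖b₂ - b₁‖ * ‖F₁‖) * ‖c‖ := by
    calc ‖b₂ - b₁‖ = ‖(b₂ * (F₂ - F₁) + (b₂ - b₁) * F₁) * c‖ := by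
          rw [← hkey]; exact norm_sub_rev _ _
    _ ≤ ‖b₂ * (F₂ - F₁) + (b₂ - b₁) * F₁‖ * ‖c‖ := norm_mul_le _ _
    _ ≤ (‖b₂‖ * ‖F₂ - F₁‖ + ‖b₂ - b₁‖ * ‖F₁‖) * ‖c‖ := by
        have n1 := norm_add_le (b₂ * (F₂ - F₁)) ((b₂ - b₁) * F₁)
        have n2 : ‖b₂ * (F₂ - F₁)‖ ≤ ‖b₂‖ * ‖F₂ - F₁‖ := norm_mul_le _ _
        have n3 : ‖(b₂ - b₁) * F₁‖ ≤ ‖b₂ - b₁‖ * ‖F₁‖ := norm_mul_le _ _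
        exact mul_le_mul_of_nonneg_right (le_trans n1 (add_le_add n2 n3)) (norm_nonneg c)
  -- conclude
  have hδ0 : ‖b₂ - b₁‖ = 0 := by
    by_contra hne
    have hδpos : 0 < ‖b₂ - b₁‖ := lt_of_le_of_ne (norm_nonneg _) (Ne.symm hne)
    have hW₁ : ‖w₁‖ ≤ 1 / 3 := by linarith
    have hW₂ : ‖w₂‖ ≤ 1 / 3 := by linarith
    have hMδ : (0:ℝ) ≤ ‖a‖ * ‖b₂ - b₁‖ := mul_nonneg (norm_nonneg a) hδnn
    have e1 : ‖w₂‖ * (‖a‖ * ‖b₂ - b₁‖) ≤ (1/3) * (‖a‖ * ‖b₂ - b₁‖) :=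
      mul_le_mul_of_nonneg_right hW₂ hMδ
    have e2 : (‖a‖ * ‖b₂ - b₁‖) * ‖w₁‖ ≤ (‖a‖ * ‖b₂ - b₁‖) * (1/3) :=
      mul_le_mul_of_nonneg_left hW₁ hMδ
    have e3 : ‖w₂‖ * (‖a‖ * ‖b₂ - b₁‖) * ‖w₁‖ ≤ (1/3) * (‖a‖ * ‖b₂ - b₁‖) * (1/3) :=
      mul_le_mul (mul_le_mul_of_nonneg_right hW₂ hMδ) hW₁ (norm_nonneg w₁)
        (by positivity)
    have hΔwb : ‖w₂ - w₁‖ ≤ (16/9) * (‖a‖ * ‖b₂ - b₁‖) := by linarith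
    have hΔFb : ‖F₂ - F₁‖ ≤ (16/9) * (‖a‖ * ‖b₂ - b₁‖) * ‖a‖ :=
      le_trans hΔF (mul_le_mul_of_nonneg_right hΔwb (norm_nonneg a))
    have hW₁' : ‖w₁‖ ≤ (4/3) * (‖a‖ * ‖b₁‖) := by linarith
    have hF₁b : ‖F₁‖ ≤ (4/3) * (‖a‖ * ‖b₁‖) * ‖a‖ :=
      le_trans hF₁n (mul_le_mul_of_nonneg_right hW₁' (norm_nonneg a))
    have c1 : ‖b₂‖ * ‖F₂ - F₁‖ ≤ ‖b₂‖ * ((16/9) * (‖a‖ * ‖b₂ - b₁‖) * ‖a‖) :=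
      mul_le_mul_of_nonneg_left hΔFb (norm_nonneg b₂)
    have c2 : ‖b₂ - b₁‖ * ‖F₁‖ ≤ ‖b₂ - b₁‖ * ((4/3) * (‖a‖ * ‖b₁‖) * ‖a‖) :=
      mul_le_mul_of_nonneg_left hF₁b hδnn
    have c3 : ‖b₂ - b₁‖ ≤ (‖b₂‖ * ((16/9) * (‖a‖ * ‖b₂ - b₁‖) * ‖a‖)
        + ‖b₂ - b₁‖ * ((4/3) * (‖a‖ * ‖b₁‖) * ‖a‖)) * ‖c‖ :=
      le_trans hδfin (mul_le_mul_of_nonneg_right (add_le_add c1 c2) (norm_nonneg c))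
    have d1 : ‖b₂‖ * (4 * ‖a‖ ^ 2 * ‖c‖) * ‖b₂ - b₁‖ < 1 * ‖b₂ - b₁‖ :=
      mul_lt_mul_of_pos_right hb₂' hδpos
    have d2 : ‖b₁‖ * (4 * ‖a‖ ^ 2 * ‖c‖) * ‖b₂ - b₁‖ < 1 * ‖b₂ - b₁‖ :=
      mul_lt_mul_of_pos_right hb₁' hδpos
    exact contr_aux ‖a‖ ‖c‖ ‖b₁‖ ‖b₂‖ ‖b₂ - b₁‖ hδpos d2 d1 c3
  have hbb : b₂ - b₁ = 0 := norm_eq_zero.mp hδ0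
  have : b₂ = b₁ := by rwa [sub_eq_zero] at hbb
  exact this.symm
end

section
/- Suppose E(a) is invertible in B. Then Ψ_a is a bijection of (a subset of) B(0, 2/(11‖a‖²‖E(a)⁻¹‖)) onto a neighborhood of 0 containing B(0, 1/(11‖a‖²‖E(a)⁻¹‖²)); moreover, for b in this domain, Ψ_a(b) = b·E(a)·(1 + E(a)⁻¹ Σ_{n≥1} E(a(ba)ⁿ)) where the last factor is invertible, so Ψ_a(b) is invertible in B if and only if b is invertible; in particular Ψ_a^{⟨−1⟩} maps invertible elements of B(0, 1/(11‖a‖²‖E(a)⁻¹‖²)) to invertible elements of B(0, 2/(11‖a‖²‖E(a)⁻¹‖)). -/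
open scoped NNReal

section NormedRing

variable {R : Type*} [NormedRing R] [HasSummableGeomSeries R]

theorem hasSum_pow_succ_inverse_one_sub (x : R) (h : ‖x‖ < 1) :
    HasSum (fun n ↦ x ^ (n + 1)) (Ring.inverse (1 - x) - 1) := by
  simpa using (hasSum_nat_add_iff' 1).mpr (hasSum_geom_series_inverse x h)

theorem norm_inverse_one_sub_sub_one_le_s14 {x : R} {t : ℝ} (hx : ‖x‖ ≤ t) (ht : t < 1) :
    ‖Ring.inverse (1 - x) - 1‖ ≤ t / (1 - t) := by
  have ht0 : 0 ≤ t := (norm_nonneg x).trans hx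
  rw [← (hasSum_pow_succ_inverse_one_sub x (hx.trans_lt ht)).tsum_eq, div_eq_mul_inv]
  refine tsum_of_norm_bounded ((hasSum_geometric_of_lt_one ht0 ht).mul_left t) fun n ↦ ?_
  calc ‖x ^ (n + 1)‖ ≤ ‖x‖ ^ (n + 1) := norm_pow_le' x n.succ_pos
    _ ≤ t ^ (n + 1) := by gcongr
    _ = t * t ^ n := pow_succ' t n

theorem norm_inverse_one_sub_sub_inverse_one_sub_sub_le {x y : R} {t : ℝ} (hx : ‖x‖ ≤ t)
    (hy : ‖y‖ ≤ t) (ht : t < 1) :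
    ‖Ring.inverse (1 - x) - Ring.inverse (1 - y) - (x - y)‖ ≤ ((1 - t)⁻¹ ^ 2 - 1) * ‖x - y‖ := by
  set u := Ring.inverse (1 - x)
  set v := Ring.inverse (1 - y)
  have hu : u * (1 - x) = 1 :=
    Ring.inverse_mul_cancel _ (isUnit_one_sub_of_norm_lt_one (hx.trans_lt ht))
  have hv : (1 - y) * v = 1 :=
    Ring.mul_inverse_cancel _ (isUnit_one_sub_of_norm_lt_one (hy.trans_lt ht))
  -- the resolvent identity `u - v = u (x - y) v`, expanded around `u = v = 1`
  have key : u - v - (x - y) =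
      (u - 1) * (x - y) * (v - 1) + (u - 1) * (x - y) + (x - y) * (v - 1) := by
    have resolvent : u - v = u * (x - y) * v := by
      calc u - v = u * ((1 - y) * v) - (u * (1 - x)) * v := by rw [hu, hv, mul_one, one_mul]
        _ = u * (x - y) * v := by noncomm_ring
    rw [resolvent]; noncomm_ring
  have hp := norm_inverse_one_sub_sub_one_le_s14 hx ht
  have hq := norm_inverse_one_sub_sub_one_le_s14 hy ht
  have ht1 : 0 < 1 - t := sub_pos.mpr ht
  have ht0 : 0 ≤ t := (norm_nonneg x).trans hx
  set p := t / (1 - t)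
  have hp0 : 0 ≤ p := div_nonneg ht0 ht1.le
  have hconst : (1 - t)⁻¹ ^ 2 - 1 = p * p + p + p := by
    simp only [p]; field_simp; ring
  rw [key, hconst]
  calc ‖(u - 1) * (x - y) * (v - 1) + (u - 1) * (x - y) + (x - y) * (v - 1)‖
      ≤ ‖u - 1‖ * ‖x - y‖ * ‖v - 1‖ + ‖u - 1‖ * ‖x - y‖ + ‖x - y‖ * ‖v - 1‖ := by
        refine (norm_add₃_le).trans (add_le_add_three ?_ (norm_mul_le _ _) (norm_mul_le _ _))
        exact (norm_mul_le _ _).trans (by gcongr; exact norm_mul_le _ _)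
    _ ≤ p * ‖x - y‖ * p + p * ‖x - y‖ + ‖x - y‖ * p := by gcongr
    _ = (p * p + p + p) * ‖x - y‖ := by ring

end NormedRing

theorem existsUnique_fixedPoint_of_norm_sub_le {F : Type*} [NormedAddCommGroup F] [CompleteSpace F]
    {s : Set F} (hs : IsClosed s) (h0 : (0 : F) ∈ s) {T : F → F} {K : ℝ≥0} (hK : K < 1) {ρ : ℝ}
    (hmaps : ∀ y ∈ s, ‖y‖ ≤ ρ → T y ∈ s)
    (hlip : ∀ y ∈ s, ∀ z ∈ s, ‖y‖ ≤ ρ → ‖z‖ ≤ ρ → ‖T y - T z‖ ≤ K * ‖y - z‖)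
    (hT0 : ‖T 0‖ < (1 - K) * ρ) :
    ∃! y, y ∈ s ∧ ‖y‖ < ρ ∧ T y = y := by
  have hK' : (K : ℝ) < 1 := hK
  have hρ : 0 ≤ ρ := by nlinarith [norm_nonneg (T 0)]
  have hball : ∀ y ∈ s, ‖y‖ ≤ ρ → ‖T y‖ < ρ := fun y hy hyρ ↦ by
    have hTy := hlip y hy 0 h0 hyρ (by simpa using hρ)
    rw [sub_zero] at hTy
    nlinarith [norm_le_insert' (T y) (T 0), mul_le_mul_of_nonneg_left hyρ K.2]
  set t := s ∩ Metric.closedBall 0 ρ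
  have mem_t : ∀ {y}, y ∈ t ↔ y ∈ s ∧ ‖y‖ ≤ ρ := by simp [t]
  have hmapsTo : Set.MapsTo T t t := fun y hy ↦
    mem_t.2 ⟨hmaps y (mem_t.1 hy).1 (mem_t.1 hy).2, (hball y (mem_t.1 hy).1 (mem_t.1 hy).2).le⟩
  have hcontr : ContractingWith K (hmapsTo.restrict T t t) := by
    refine ⟨hK, LipschitzWith.of_dist_le_mul fun y z ↦ ?_⟩
    rw [Subtype.dist_eq, Subtype.dist_eq, dist_eq_norm, dist_eq_norm]
    exact hlip y (mem_t.1 y.2).1 z (mem_t.1 z.2).1 (mem_t.1 y.2).2 (mem_t.1 z.2).2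
  obtain ⟨y, hyt, hfix, -⟩ :=
    hcontr.exists_fixedPoint' (hs.inter Metric.isClosed_closedBall).isComplete hmapsTo
      (mem_t.2 ⟨h0, by simpa using hρ⟩) (edist_ne_top _ _)
  obtain ⟨hys, hyρ⟩ := mem_t.1 hyt
  refine ⟨y, ⟨hys, hfix.eq ▸ hball y hys hyρ, hfix⟩, ?_⟩
  rintro z ⟨hzs, hzρ, hzfix⟩
  have hdist := hlip z hzs y hys hzρ.le hyρ
  rw [hzfix, hfix.eq] at hdist
  have : ‖z - y‖ = 0 := by nlinarith [norm_nonneg (z - y)]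
  exact sub_eq_zero.mp (norm_eq_zero.mp this)

theorem SubmonoidClass.isUnit_mk_iff {M S : Type*} [Monoid M] [SetLike S M] [SubmonoidClass S M]
    {s : S} {x : M} (hx : x ∈ s) :
    IsUnit (⟨x, hx⟩ : s) ↔ ∃ y ∈ s, x * y = 1 ∧ y * x = 1 := by
  rw [isUnit_iff_exists]
  constructor
  · rintro ⟨⟨y, hy⟩, hxy, hyx⟩
    exact ⟨y, hy, congrArg Subtype.val hxy, congrArg Subtype.val hyx⟩
  · rintro ⟨y, hy, hxy, hyx⟩
    exact ⟨⟨y, hy⟩, Subtype.ext hxy, Subtype.ext hyx⟩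

theorem Subalgebra.isUnit_one_add_mk {𝕜 A : Type*} [NormedField 𝕜] [NormedRing A]
    [NormedAlgebra 𝕜 A] [CompleteSpace A] {B : Subalgebra 𝕜 A} (hB : IsClosed (B : Set A))
    {x : A} (hx : x ∈ B) (h : ‖x‖ < 1) : IsUnit (1 + ⟨x, hx⟩ : B) := by
  have : CompleteSpace B := completeSpace_coe_iff_isComplete.mpr hB.isComplete
  simpa using isUnit_one_sub_of_norm_lt_one (x := -(⟨x, hx⟩ : B)) (by rwa [norm_neg])

theorem norm_mul_le_of_norm_le_two_div {R : Type*} [NormedRing R] {a c y : R} (hq : 1 ≤ ‖c‖ * ‖a‖)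
    (hy : ‖y‖ ≤ 2 / (11 * ‖a‖ ^ 2 * ‖c‖)) : ‖y * a‖ ≤ 2 / (11 * (‖c‖ * ‖a‖)) := by
  have ha0 : ‖a‖ ≠ 0 := fun h ↦ by rw [h, mul_zero] at hq; linarith
  calc ‖y * a‖ ≤ ‖y‖ * ‖a‖ := norm_mul_le _ _
    _ ≤ 2 / (11 * ‖a‖ ^ 2 * ‖c‖) * ‖a‖ := by gcongr
    _ = 2 / (11 * (‖c‖ * ‖a‖)) := by field_simp

structure IsConditionalExpectation {𝕜 A : Type*} [NormedField 𝕜] [NormedRing A] [NormedAlgebra 𝕜 A]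
    (B : Subalgebra 𝕜 A) (E : A →L[𝕜] A) : Prop where
  mem : ∀ x, E x ∈ B
  map_of_mem : ∀ x ∈ B, E x = x
  norm_map_le : ∀ x, ‖E x‖ ≤ ‖x‖
  map_mul_mul : ∀ b₁ ∈ B, ∀ b₂ ∈ B, ∀ x, E (b₁ * x * b₂) = b₁ * E x * b₂

namespace IsConditionalExpectation

variable {𝕜 A : Type*} [NormedField 𝕜] [NormedRing A] [NormedAlgebra 𝕜 A] {B : Subalgebra 𝕜 A}
  {E : A →L[𝕜] A}

theorem map_one (hE : IsConditionalExpectation B E) : E 1 = 1 :=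
  hE.map_of_mem 1 (one_mem B)

theorem map_mul_left (hE : IsConditionalExpectation B E) {b : A} (hb : b ∈ B) (x : A) :
    E (b * x) = b * E x := by
  simpa using hE.map_mul_mul b hb 1 (one_mem B) x

theorem one_le_norm_mul_norm [Nontrivial A] (hE : IsConditionalExpectation B E) {a c : A}
    (hca : c * E a = 1) : 1 ≤ ‖c‖ * ‖a‖ :=
  calc (1 : ℝ) ≤ ‖(1 : A)‖ := one_le_norm_one A
    _ = ‖c * E a‖ := by rw [hca]
    _ ≤ ‖c‖ * ‖E a‖ := norm_mul_le _ _
    _ ≤ ‖c‖ * ‖a‖ := by gcongr; exact hE.norm_map_le a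

end IsConditionalExpectation

section PsiA

variable {A : Type*} [NormedRing A] [NormedAlgebra ℂ A] [CompleteSpace A]
  {B : Subalgebra ℂ A} {E : A →L[ℂ] A} {a : A}

theorem PsiA_zero (hE : IsConditionalExpectation B E) : PsiA E a 0 = 0 := by
  simp [PsiA, hE.map_one]

theorem PsiA_mem (hE : IsConditionalExpectation B E) (b : A) : PsiA E a b ∈ B :=
  sub_mem (hE.mem _) (one_mem B)

theorem PsiA_eq_mul (hE : IsConditionalExpectation B E) {b : A} (hb : b ∈ B) (h : ‖b * a‖ < 1) :
    PsiA E a b = b * E (a * Ring.inverse (1 - b * a)) := by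
  have hu : (1 - b * a) * Ring.inverse (1 - b * a) = 1 :=
    Ring.mul_inverse_cancel _ (isUnit_one_sub_of_norm_lt_one h)
  have : Ring.inverse (1 - b * a) - 1 = b * (a * Ring.inverse (1 - b * a)) := by
    rw [← mul_assoc]; nth_rewrite 2 [← hu]; noncomm_ring
  rw [← hE.map_mul_left hb, ← this, map_sub, hE.map_one, PsiA]

theorem tsum_map_mul_pow_succ (E : A →L[ℂ] A) {b : A} (h : ‖b * a‖ < 1) :
    ∑' n, E (a * (b * a) ^ (n + 1)) = E (a * (Ring.inverse (1 - b * a) - 1)) :=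
  (E.hasSum ((hasSum_pow_succ_inverse_one_sub _ h).mul_left a)).tsum_eq

theorem norm_PsiA_sub_PsiA_sub_mul_le (hE : IsConditionalExpectation B E) {y z : A} (hy : y ∈ B)
    (hz : z ∈ B) {t : ℝ} (hyt : ‖y * a‖ ≤ t) (hzt : ‖z * a‖ ≤ t) (ht : t < 1) :
    ‖PsiA E a y - PsiA E a z - (y - z) * E a‖ ≤ ((1 - t)⁻¹ ^ 2 - 1) * ‖(y - z) * a‖ := by
  have : PsiA E a y - PsiA E a z - (y - z) * E a =
      E (Ring.inverse (1 - y * a) - Ring.inverse (1 - z * a) - (y * a - z * a)) := by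
    rw [← hE.map_mul_left (sub_mem hy hz), sub_mul]
    simp only [PsiA, map_sub]
    abel
  rw [this, sub_mul y z a]
  exact (hE.norm_map_le _).trans (norm_inverse_one_sub_sub_inverse_one_sub_sub_le hyt hzt ht)

theorem norm_PsiA_sub_PsiA_sub_mul_mul_le_half [Nontrivial A] (hE : IsConditionalExpectation B E)
    {c : A} (hca : c * E a = 1) {y z : A} (hy : y ∈ B) (hz : z ∈ B)
    (hyρ : ‖y‖ ≤ 2 / (11 * ‖a‖ ^ 2 * ‖c‖)) (hzρ : ‖z‖ ≤ 2 / (11 * ‖a‖ ^ 2 * ‖c‖)) :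
    ‖(PsiA E a y - PsiA E a z - (y - z) * E a) * c‖ ≤ 1 / 2 * ‖y - z‖ := by
  have hq := hE.one_le_norm_mul_norm hca
  set M := 2 / (11 * (‖c‖ * ‖a‖))
  have hM0 : 0 ≤ M := by positivity
  have hM1 : M < 1 := by rw [div_lt_one (by linarith)]; linarith
  have hC : 0 ≤ (1 - M)⁻¹ ^ 2 - 1 :=
    sub_nonneg.mpr (one_le_pow₀ ((one_le_inv₀ (by linarith)).mpr (by linarith)))
  calc ‖(PsiA E a y - PsiA E a z - (y - z) * E a) * c‖
      ≤ ‖PsiA E a y - PsiA E a z - (y - z) * E a‖ * ‖c‖ := norm_mul_le _ _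
    _ ≤ ((1 - M)⁻¹ ^ 2 - 1) * (‖y - z‖ * ‖a‖) * ‖c‖ := by
        gcongr
        refine (norm_PsiA_sub_PsiA_sub_mul_le hE hy hz (norm_mul_le_of_norm_le_two_div hq hyρ)
          (norm_mul_le_of_norm_le_two_div hq hzρ) hM1).trans ?_
        gcongr
        exact norm_mul_le _ _
    _ = ‖c‖ * ‖a‖ * ((1 - M)⁻¹ ^ 2 - 1) * ‖y - z‖ := by ring
    _ ≤ 1 / 2 * ‖y - z‖ := by
        gcongr
        -- since `‖c‖ ‖a‖ M = 2 / 11`, this amounts to `4 (2 - M) ≤ 11 (1 - M)²`, and `M ≤ 2 / 11`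
        have h11 : 0 < 11 * (‖c‖ * ‖a‖) - 2 := by linarith
        rw [show 1 - M = (11 * (‖c‖ * ‖a‖) - 2) / (11 * (‖c‖ * ‖a‖)) by
          rw [sub_div, div_self (by positivity)]]
        rw [inv_div, div_pow, mul_sub, mul_one, mul_div_assoc', sub_le_iff_le_add,
          div_le_iff₀ (by positivity)]
        nlinarith

theorem existsUnique_PsiA_eq [Nontrivial A] (hB : IsClosed (B : Set A))
    (hE : IsConditionalExpectation B E) {c : A} (hc : c ∈ B) (hac : E a * c = 1)
    (hca : c * E a = 1) {b₀ : A} (hb₀ : b₀ ∈ B)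
    (hb₀_lt : ‖b₀‖ < 1 / (11 * ‖a‖ ^ 2 * ‖c‖ ^ 2)) :
    ∃! b : A, b ∈ B ∧ ‖b‖ < 2 / (11 * ‖a‖ ^ 2 * ‖c‖) ∧ PsiA E a b = b₀ := by
  have hq := hE.one_le_norm_mul_norm hca
  have hc0 : 0 < ‖c‖ := by nlinarith [norm_nonneg c, norm_nonneg a]
  have ha0 : 0 < ‖a‖ := by nlinarith [norm_nonneg c, norm_nonneg a]
  -- a Newton-type iteration whose fixed points are the solutions of `Ψ_a(y) = b₀`
  set T : A → A := fun y ↦ y + (b₀ - PsiA E a y) * c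
  have hT_fixed : ∀ y, T y = y ↔ PsiA E a y = b₀ := fun y ↦ by
    have hcu : IsUnit c := ⟨⟨c, E a, hca, hac⟩, rfl⟩
    simp only [T]
    rw [add_eq_left, hcu.mul_left_eq_zero, sub_eq_zero, eq_comm]
  have hmaps : ∀ y ∈ B, ‖y‖ ≤ 2 / (11 * ‖a‖ ^ 2 * ‖c‖) → T y ∈ B := fun y hy _ ↦
    add_mem hy (mul_mem (sub_mem hb₀ (PsiA_mem hE y)) hc)
  have hlip : ∀ y ∈ B, ∀ z ∈ B, ‖y‖ ≤ 2 / (11 * ‖a‖ ^ 2 * ‖c‖) →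
      ‖z‖ ≤ 2 / (11 * ‖a‖ ^ 2 * ‖c‖) → ‖T y - T z‖ ≤ ((1 / 2 : ℝ≥0) : ℝ) * ‖y - z‖ := by
    intro y hy z hz hyρ hzρ
    have hTyz : T y - T z = -((PsiA E a y - PsiA E a z - (y - z) * E a) * c) := by
      have hyz : (y - z) * E a * c = y - z := by rw [mul_assoc, hac, mul_one]
      simp only [T]
      rw [sub_mul _ ((y - z) * E a), hyz]
      noncomm_ring
    rw [hTyz, norm_neg]
    exact_mod_cast norm_PsiA_sub_PsiA_sub_mul_mul_le_half hE hca hy hz hyρ hzρ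
  have hT0 : ‖T 0‖ < (1 - ((1 / 2 : ℝ≥0) : ℝ)) * (2 / (11 * ‖a‖ ^ 2 * ‖c‖)) :=
    calc ‖T 0‖ = ‖b₀ * c‖ := by simp [T, PsiA_zero hE]
      _ ≤ ‖b₀‖ * ‖c‖ := norm_mul_le _ _
      _ < 1 / (11 * ‖a‖ ^ 2 * ‖c‖ ^ 2) * ‖c‖ := by gcongr
      _ = (1 - ((1 / 2 : ℝ≥0) : ℝ)) * (2 / (11 * ‖a‖ ^ 2 * ‖c‖)) := by
          push_cast; field_simp; ring
  simpa only [hT_fixed, SetLike.mem_coe] using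
    existsUnique_fixedPoint_of_norm_sub_le hB (zero_mem B) (by norm_num) hmaps hlip hT0

theorem PsiA_eq_mul_mul_one_add (hE : IsConditionalExpectation B E) {b : A} (hb : b ∈ B)
    (h : ‖b * a‖ < 1) {c : A} (hac : E a * c = 1) :
    PsiA E a b = b * E a * (1 + c * ∑' n, E (a * (b * a) ^ (n + 1))) := by
  rw [tsum_map_mul_pow_succ E h, PsiA_eq_mul hE hb h, mul_assoc b, mul_add, mul_one,
    ← mul_assoc (E a) c, hac, one_mul, mul_sub, mul_one, map_sub, add_sub_cancel]

theorem norm_mul_tsum_lt_one [Nontrivial A] (hE : IsConditionalExpectation B E) {c : A}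
    (hca : c * E a = 1) {b : A} (hb_le : ‖b‖ ≤ 2 / (11 * ‖a‖ ^ 2 * ‖c‖)) :
    ‖c * ∑' n, E (a * (b * a) ^ (n + 1))‖ < 1 := by
  have hq := hE.one_le_norm_mul_norm hca
  set M := 2 / (11 * (‖c‖ * ‖a‖))
  have hM1 : M < 1 := by rw [div_lt_one (by linarith)]; linarith
  have hba : ‖b * a‖ ≤ M := norm_mul_le_of_norm_le_two_div hq hb_le
  calc ‖c * ∑' n, E (a * (b * a) ^ (n + 1))‖
      ≤ ‖c‖ * ‖E (a * (Ring.inverse (1 - b * a) - 1))‖ := by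
        rw [← tsum_map_mul_pow_succ E (hba.trans_lt hM1)]; exact norm_mul_le _ _
    _ ≤ ‖c‖ * (‖a‖ * (M / (1 - M))) := by
        gcongr
        exact (hE.norm_map_le _).trans ((norm_mul_le _ _).trans
          (by gcongr; exact norm_inverse_one_sub_sub_one_le_s14 hba hM1))
    _ < 1 := by
        have h11 : 0 < 11 * (‖c‖ * ‖a‖) - 2 := by linarith
        rw [show 1 - M = (11 * (‖c‖ * ‖a‖) - 2) / (11 * (‖c‖ * ‖a‖)) by
          rw [sub_div, div_self (by positivity)]]
        rw [div_div_div_cancel_right₀ (by positivity), ← mul_assoc, mul_div_assoc',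
          div_lt_one h11]
        linarith

theorem PsiA_factorization [Nontrivial A] (hB : IsClosed (B : Set A))
    (hE : IsConditionalExpectation B E) {c : A} (hc : c ∈ B) (hac : E a * c = 1)
    (hca : c * E a = 1) {b : A} (hb : b ∈ B) (hb_lt : ‖b‖ < 2 / (11 * ‖a‖ ^ 2 * ‖c‖)) :
    PsiA E a b = b * E a * (1 + c * ∑' n, E (a * (b * a) ^ (n + 1))) ∧
      IsUnit (1 + c * ∑' n, E (a * (b * a) ^ (n + 1))) ∧
      ((∃ d ∈ B, PsiA E a b * d = 1 ∧ d * PsiA E a b = 1) ↔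
        (∃ d ∈ B, b * d = 1 ∧ d * b = 1)) := by
  have hq := hE.one_le_norm_mul_norm hca
  have hba : ‖b * a‖ < 1 := (norm_mul_le_of_norm_le_two_div hq hb_lt.le).trans_lt
    (by rw [div_lt_one (by linarith)]; linarith)
  set x := c * ∑' n, E (a * (b * a) ^ (n + 1))
  have hxB : x ∈ B := mul_mem hc (tsum_map_mul_pow_succ E hba ▸ hE.mem _)
  have hfac := PsiA_eq_mul_mul_one_add hE hb hba hac
  have hunit := Subalgebra.isUnit_one_add_mk hB hxB (norm_mul_tsum_lt_one hE hca hb_lt.le)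
  have hEa : IsUnit (⟨E a, hE.mem a⟩ : B) :=
    (SubmonoidClass.isUnit_mk_iff _).2 ⟨c, hc, hac, hca⟩
  refine ⟨hfac, by simpa using hunit.map B.val, ?_⟩
  rw [← SubmonoidClass.isUnit_mk_iff (PsiA_mem hE b), ← SubmonoidClass.isUnit_mk_iff hb]
  have : (⟨PsiA E a b, PsiA_mem hE b⟩ : B) = ⟨b, hb⟩ * (⟨E a, hE.mem a⟩ * (1 + ⟨x, hxB⟩)) :=
    Subtype.ext (by simp [hfac, x, mul_assoc])
  rw [this, IsUnit.mul_right_iff (hEa.mul hunit)]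

end PsiA

theorem stmt14 {A : Type*} [NormedRing A] [NormedAlgebra ℂ A] [CompleteSpace A]
    (B : Subalgebra ℂ A) (hB : IsClosed (B : Set A))
    (E : A →L[ℂ] A) (hrange : ∀ x : A, E x ∈ B) (hfix : ∀ x ∈ B, E x = x)
    (hnorm : ∀ x : A, ‖E x‖ ≤ ‖x‖)
    (hbimod : ∀ b₁ ∈ B, ∀ b₂ ∈ B, ∀ x : A, E (b₁ * x * b₂) = b₁ * E x * b₂)
    (a : A) (ha : a ≠ 0) (hEa : ∃ c ∈ B, E a * c = 1 ∧ c * E a = 1) :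
    (∀ b₀ ∈ B, ‖b₀‖ < 1 / (11 * ‖a‖ ^ 2 * ‖Ring.inverse (E a)‖ ^ 2) →
      ∃! b : A, b ∈ B ∧ ‖b‖ < 2 / (11 * ‖a‖ ^ 2 * ‖Ring.inverse (E a)‖) ∧
        PsiA E a b = b₀) ∧
    (∀ b ∈ B, ‖b‖ < 2 / (11 * ‖a‖ ^ 2 * ‖Ring.inverse (E a)‖) →
      PsiA E a b =
        b * E a * (1 + Ring.inverse (E a) * ∑' n : ℕ, E (a * (b * a) ^ (n + 1))) ∧
      IsUnit (1 + Ring.inverse (E a) * ∑' n : ℕ, E (a * (b * a) ^ (n + 1))) ∧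
      ((∃ c ∈ B, PsiA E a b * c = 1 ∧ c * PsiA E a b = 1) ↔
        (∃ c ∈ B, b * c = 1 ∧ c * b = 1))) ∧
    (∀ b₀ ∈ B, ‖b₀‖ < 1 / (11 * ‖a‖ ^ 2 * ‖Ring.inverse (E a)‖ ^ 2) →
      (∃ c ∈ B, b₀ * c = 1 ∧ c * b₀ = 1) →
      ∃ b ∈ B, ‖b‖ < 2 / (11 * ‖a‖ ^ 2 * ‖Ring.inverse (E a)‖) ∧
        PsiA E a b = b₀ ∧ ∃ c ∈ B, b * c = 1 ∧ c * b = 1) := by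
  obtain ⟨c, hc, hac, hca⟩ := hEa
  have : Nontrivial A := nontrivial_of_ne a 0 ha
  have hE : IsConditionalExpectation B E := ⟨hrange, hfix, hnorm, hbimod⟩
  have hinv : Ring.inverse (E a) = c := Ring.inverse_unit ⟨E a, c, hac, hca⟩
  rw [hinv]
  have solve := fun b₀ hb₀ hb₀_lt ↦ existsUnique_PsiA_eq hB hE hc hac hca (b₀ := b₀) hb₀ hb₀_lt
  have factor := fun b hb hb_lt ↦ PsiA_factorization hB hE hc hac hca (b := b) hb hb_lt
  refine ⟨solve, factor, fun b₀ hb₀ hb₀_lt hb₀_inv ↦ ?_⟩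
  obtain ⟨b, ⟨hb, hb_lt, hPsi⟩, -⟩ := solve b₀ hb₀ hb₀_lt
  exact ⟨b, hb, hb_lt, hPsi, (factor b hb hb_lt).2.2.1 (hPsi ▸ hb₀_inv)⟩
end

section
/- Relation between amalgamated R- and S-transforms: for B commutative, a ∈ A nonzero with E(a) invertible, and invertible b ∈ B of sufficiently small norm, g_a(b)·R_a(g_a(b)) = Ψ_a(b) and Ψ_a(b)·S_a(Ψ_a(b)) = g_a(b); consequently the maps b ↦ b·R_a(b) and b ↦ b·S_a(b) are inverse to each other near 0, i.e. b·S_a(b) = [b·R_a(b)]^{⟨−1⟩}. -/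
/-- `Ring.inverse` is determined by a two-sided inverse. -/
lemma ringInverse_unique {M₀ : Type*} [MonoidWithZero M₀] {x y : M₀}
    (h1 : x * y = 1) (h2 : y * x = 1) : Ring.inverse x = y := by
  have := Ring.inverse_unit (⟨x, y, h1, h2⟩ : M₀ˣ)
  simpa using this

set_option maxHeartbeats 1000000 in
/-- Relation between the amalgamated R- and S-transforms: for invertible `b` of sufficiently
small norm, `g_a(b)·R_a(g_a(b)) = Ψ_a(b)` (where `R_a(g_a(b)) = b⁻¹ - g_a(b)⁻¹`) and
`Ψ_a(b)·S_a(Ψ_a(b)) = g_a(b)` (where `S_a(Ψ_a(b)) = Ψ_a(b)⁻¹(1+Ψ_a(b))·b`); consequently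
`b ↦ b·R_a(b)` and `b ↦ b·S_a(b)` are inverse to each other near `0`. -/
theorem stmt16 {A : Type*} [NormedRing A] [NormedAlgebra ℂ A] [CompleteSpace A]
    (B : Subalgebra ℂ A) (hB : IsClosed (B : Set A))
    (hcomm : ∀ x ∈ B, ∀ y ∈ B, x * y = y * x)
    (E : A →L[ℂ] A) (hrange : ∀ x : A, E x ∈ B) (hfix : ∀ x ∈ B, E x = x)
    (hnorm : ∀ x : A, ‖E x‖ ≤ ‖x‖)
    (hbimod : ∀ b₁ ∈ B, ∀ b₂ ∈ B, ∀ x : A, E (b₁ * x * b₂) = b₁ * E x * b₂)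
    (a : A) (ha : a ≠ 0) (hEa : ∃ c ∈ B, E a * c = 1 ∧ c * E a = 1) :
    ∃ δ > (0 : ℝ), ∀ b ∈ B, (∃ c ∈ B, b * c = 1 ∧ c * b = 1) → ‖b‖ < δ →
      gA E a b * (Ring.inverse b - Ring.inverse (gA E a b)) = PsiA E a b ∧
      PsiA E a b * (Ring.inverse (PsiA E a b) * (1 + PsiA E a b) * b) = gA E a b := by
  obtain ⟨cA, hcAB, hEacA, hcAEa⟩ := hEa
  haveI : Nontrivial A := ⟨⟨a, 0, ha⟩⟩
  set M : ℝ := ‖(1 : A)‖ with hMdef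
  have hM1 : 1 ≤ M := one_le_norm_one A
  have hM0 : (0 : ℝ) ≤ M := by linarith
  have ha0 : (0 : ℝ) ≤ ‖a‖ := norm_nonneg a
  have hc0 : (0 : ℝ) ≤ ‖cA‖ := norm_nonneg cA
  set X : ℝ := (‖cA‖ + 1) * (M + 1) * (‖a‖ + 1) ^ 2 with hXdef
  have hXpos : (0 : ℝ) < X := by positivity
  have hD : (0 : ℝ) < 4 * X := by positivity
  -- three domination facts
  have hXa : ‖a‖ ≤ X := by
    nlinarith [mul_nonneg hc0 hM0, sq_nonneg ‖a‖, sq_nonneg (‖a‖ + 1),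
      mul_nonneg (mul_nonneg hc0 hM0) (sq_nonneg (‖a‖ + 1)),
      mul_nonneg hc0 (sq_nonneg (‖a‖ + 1)), mul_nonneg hM0 (sq_nonneg (‖a‖ + 1))]
  have hXMa : M * ‖a‖ ≤ X := by
    nlinarith [mul_nonneg hc0 hM0, sq_nonneg ‖a‖, mul_nonneg hM0 ha0,
      mul_nonneg (mul_nonneg hc0 hM0) (sq_nonneg (‖a‖ + 1)),
      mul_nonneg hc0 (sq_nonneg (‖a‖ + 1)), mul_nonneg hM0 (sq_nonneg ‖a‖),
      mul_nonneg hM0 ha0, mul_nonneg (mul_nonneg hM0 ha0) ha0]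
  have hXcMa2 : ‖cA‖ * M * ‖a‖ ^ 2 ≤ X := by
    nlinarith [mul_nonneg hc0 hM0, mul_nonneg hc0 ha0, mul_nonneg hM0 ha0,
      mul_nonneg (mul_nonneg hc0 hM0) ha0, sq_nonneg ‖a‖,
      mul_nonneg (mul_nonneg hc0 hM0) (sq_nonneg ‖a‖),
      mul_nonneg hc0 (sq_nonneg ‖a‖), mul_nonneg hM0 (sq_nonneg ‖a‖),
      mul_nonneg (mul_nonneg hc0 ha0) ha0, mul_nonneg (mul_nonneg hM0 ha0) ha0]
  refine ⟨1 / (4 * X), by positivity, ?_⟩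
  intro b hbB hbu hbδ
  obtain ⟨b', hb'B, hbb', hb'b⟩ := hbu
  have hb0 : (0 : ℝ) ≤ ‖b‖ := norm_nonneg b
  have hX : ‖b‖ * (4 * X) < 1 := by
    have := (lt_div_iff₀ hD).mp hbδ
    linarith [this]
  have hbX : ‖b‖ * X < 1 / 4 := by nlinarith
  -- basic norm smallness
  have hsmall : ‖a‖ * ‖b‖ < 1 / 2 := by
    nlinarith [mul_le_mul_of_nonneg_right hXa hb0]
  have hab : ‖a * b‖ < 1 / 2 := lt_of_le_of_lt (norm_mul_le a b) hsmall
  have hba : ‖b * a‖ < 1 / 2 := lt_of_le_of_lt (norm_mul_le b a) (by nlinarith)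
  have hab1 : ‖a * b‖ < 1 := by linarith
  have hba1 : ‖b * a‖ < 1 := by linarith
  -- the inverses v and v'
  have hVu : IsUnit (1 - a * b) := isUnit_one_sub_of_norm_lt_one hab1
  have hV'u : IsUnit (1 - b * a) := isUnit_one_sub_of_norm_lt_one hba1
  set v : A := Ring.inverse (1 - a * b) with hvdef
  set v' : A := Ring.inverse (1 - b * a) with hv'def
  have hv1 : (1 - a * b) * v = 1 := Ring.mul_inverse_cancel _ hVu
  have hv2 : v * (1 - a * b) = 1 := Ring.inverse_mul_cancel _ hVu
  have hv'1 : (1 - b * a) * v' = 1 := Ring.mul_inverse_cancel _ hV'u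
  have hv'2 : v' * (1 - b * a) = 1 := Ring.inverse_mul_cancel _ hV'u
  have hvm1 : v - 1 = a * b * v := by
    have h : v - a * b * v = 1 := by rw [← hv1]; noncomm_ring
    conv_lhs => rw [← h]
    noncomm_ring
  have hv'm1 : v' - 1 = b * a * v' := by
    have h : v' - b * a * v' = 1 := by rw [← hv'1]; noncomm_ring
    conv_lhs => rw [← h]
    noncomm_ring
  have hvnorm : ‖v‖ ≤ 2 * M := by
    have h1 : ‖v‖ ≤ M + ‖a * b‖ * ‖v‖ := by
      have e : v = 1 + a * b * v := eq_add_of_sub_eq' hvm1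
      calc ‖v‖ = ‖1 + a * b * v‖ := by rw [← e]
        _ ≤ ‖(1 : A)‖ + ‖a * b * v‖ := norm_add_le _ _
        _ ≤ M + ‖a * b‖ * ‖v‖ := by
            have := norm_mul_le (a * b) v; linarith
    nlinarith [norm_nonneg v]
  have hv'norm : ‖v'‖ ≤ 2 * M := by
    have h1 : ‖v'‖ ≤ M + ‖b * a‖ * ‖v'‖ := by
      have e : v' = 1 + b * a * v' := eq_add_of_sub_eq' hv'm1
      calc ‖v'‖ = ‖1 + b * a * v'‖ := by rw [← e]
        _ ≤ ‖(1 : A)‖ + ‖b * a * v'‖ := norm_add_le _ _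
        _ ≤ M + ‖b * a‖ * ‖v'‖ := by
            have := norm_mul_le (b * a) v'; linarith
    nlinarith [norm_nonneg v']
  -- v' = b * v * b'
  have hv'bvb : v' = b * v * b' := by
    have h1 : (1 - b * a) * (b * v * b') = 1 := by
      have e : (1 - b * a) * (b * v * b') = b * ((1 - a * b) * v) * b' := by noncomm_ring
      rw [e, hv1, mul_one, hbb']
    calc v' = v' * ((1 - b * a) * (b * v * b')) := by rw [h1, mul_one]
      _ = (v' * (1 - b * a)) * (b * v * b') := (mul_assoc _ _ _).symm
      _ = b * v * b' := by rw [hv'2, one_mul]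
  set u : A := E v with hudef
  have huB : u ∈ B := hrange v
  have hEv' : E v' = u := by
    rw [hv'bvb, hbimod b hbB b' hb'B v, hcomm b hbB u huB, mul_assoc, hbb', mul_one]
  have hE1 : E (1 : A) = 1 := hfix 1 (one_mem B)
  -- u is a unit
  have huone : ‖u - 1‖ < 1 := by
    have e : u - 1 = E (a * b * v) := by
      calc u - 1 = E v - E 1 := by rw [hE1]
        _ = E (v - 1) := (map_sub E v 1).symm
        _ = E (a * b * v) := by rw [hvm1]
    rw [e]
    have h1 : ‖E (a * b * v)‖ ≤ ‖a‖ * ‖b‖ * ‖v‖ := by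
      have e1 := hnorm (a * b * v)
      have e2 := norm_mul_le (a * b) v
      have e3 := norm_mul_le a b
      have e4 := mul_le_mul_of_nonneg_right e3 (norm_nonneg v)
      linarith
    have h2 : ‖a‖ * ‖b‖ * ‖v‖ ≤ ‖a‖ * ‖b‖ * (2 * M) :=
      mul_le_mul_of_nonneg_left hvnorm (mul_nonneg ha0 hb0)
    have h3 : ‖a‖ * ‖b‖ * (2 * M) < 1 := by
      nlinarith [mul_le_mul_of_nonneg_right hXMa hb0]
    linarith
  have huu : IsUnit u := by
    have := isUnit_one_sub_of_norm_lt_one (x := (1 : A) - u) (by rwa [norm_sub_rev])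
    simpa using this
  -- w := E (a * v') is a unit
  set w : A := E (a * v') with hwdef
  set d : A := w - E a with hddef
  have hdnorm : ‖d‖ ≤ ‖a‖ * ‖b‖ * ‖a‖ * (2 * M) := by
    have e : d = E (a * (b * a * v')) := by
      rw [hddef, hwdef]
      calc E (a * v') - E a = E (a * v' - a) := (map_sub E _ _).symm
        _ = E (a * (b * a * v')) := by
            congr 1
            calc a * v' - a = a * (v' - 1) := by noncomm_ring
              _ = a * (b * a * v') := by rw [hv'm1]
    rw [e]
    have e1 := hnorm (a * (b * a * v'))
    have e2 := norm_mul_le a (b * a * v')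
    have e3 := norm_mul_le (b * a) v'
    have e4 := norm_mul_le b a
    have e5 : ‖b * a * v'‖ ≤ ‖b‖ * ‖a‖ * (2 * M) := by
      have e6 := mul_le_mul_of_nonneg_right e4 (norm_nonneg v')
      have e7 : ‖b‖ * ‖a‖ * ‖v'‖ ≤ ‖b‖ * ‖a‖ * (2 * M) :=
        mul_le_mul_of_nonneg_left hv'norm (mul_nonneg hb0 ha0)
      linarith
    have e8 : ‖a‖ * ‖b * a * v'‖ ≤ ‖a‖ * (‖b‖ * ‖a‖ * (2 * M)) :=
      mul_le_mul_of_nonneg_left e5 ha0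
    calc ‖E (a * (b * a * v'))‖ ≤ ‖a‖ * (‖b‖ * ‖a‖ * (2 * M)) := by linarith
      _ = ‖a‖ * ‖b‖ * ‖a‖ * (2 * M) := by ring
  have hcd : ‖cA * d‖ < 1 := by
    have h1 : ‖cA * d‖ ≤ ‖cA‖ * ‖d‖ := norm_mul_le _ _
    have h2 : ‖cA‖ * ‖d‖ ≤ ‖cA‖ * (‖a‖ * ‖b‖ * ‖a‖ * (2 * M)) :=
      mul_le_mul_of_nonneg_left hdnorm hc0
    have h3 : ‖cA‖ * (‖a‖ * ‖b‖ * ‖a‖ * (2 * M)) < 1 := by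
      nlinarith [mul_le_mul_of_nonneg_right hXcMa2 hb0]
    linarith
  have hwu : IsUnit w := by
    have heq : w = E a * (1 + cA * d) := by
      refine Eq.symm ?_
      calc E a * (1 + cA * d) = E a + (E a * cA) * d := by noncomm_ring
        _ = E a + d := by rw [hEacA, one_mul]
        _ = w := by rw [hddef]; abel
    rw [heq]
    have h1 : IsUnit (E a) := ⟨⟨E a, cA, hEacA, hcAEa⟩, rfl⟩
    have h2 : IsUnit (1 + cA * d) := by
      have := isUnit_one_sub_of_norm_lt_one (x := -(cA * d)) (by rwa [norm_neg])
      simpa [sub_neg_eq_add] using this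
    exact h1.mul h2
  -- Psi = u - 1 = b * w
  have hPsi : PsiA E a b = u - 1 := by rw [PsiA, ← hv'def, hEv']
  have hPsibw : u - 1 = b * w := by
    calc u - 1 = E v' - E 1 := by rw [hEv', hE1]
      _ = E (v' - 1) := (map_sub E _ _).symm
      _ = E (b * (a * v') * 1) := by
          congr 1
          rw [hv'm1]; noncomm_ring
      _ = b * E (a * v') * 1 := hbimod b hbB 1 (one_mem B) _
      _ = b * w := by rw [mul_one, hwdef]
  have hbIsU : IsUnit b := ⟨⟨b, b', hbb', hb'b⟩, rfl⟩
  have hPsiU : IsUnit (u - 1) := hPsibw ▸ hbIsU.mul hwu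
  have hg : gA E a b = b * u := by rw [gA, ← hvdef, hudef]
  have hgU : IsUnit (b * u) := hbIsU.mul huu
  have hinvb : Ring.inverse b = b' := ringInverse_unique hbb' hb'b
  constructor
  · -- first identity
    rw [hg, hPsi, hinvb, mul_sub, Ring.mul_inverse_cancel _ hgU]
    congr 1
    calc b * u * b' = u * b * b' := by rw [hcomm b hbB u huB]
      _ = u * (b * b') := mul_assoc _ _ _
      _ = u := by rw [hbb', mul_one]
  · -- second identity
    rw [hg, hPsi]
    have h1p : (1 : A) + (u - 1) = u := by abel
    rw [h1p]
    calc (u - 1) * (Ring.inverse (u - 1) * u * b)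
        = ((u - 1) * Ring.inverse (u - 1)) * (u * b) := by
          rw [mul_assoc, mul_assoc]
      _ = u * b := by rw [Ring.mul_inverse_cancel _ hPsiU, one_mul]
      _ = b * u := (hcomm b hbB u huB).symm
end

section
/- Dilation formula for the S-transform: let z ∈ B be invertible and a ∈ A nonzero with E(a) invertible. Then Ψ_{za}(b) = Ψ_a(bz) for all b with ‖b‖ < 1/‖za‖ and ‖bz‖ < 1/‖a‖, S_z(Ψ_z(b)) = z⁻¹ for ‖b‖ sufficiently small, and S_{za}(b) = S_a(b)·S_z(b) for b invertible of sufficiently small norm. (Commutativity of B is not required.) -/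
set_option maxHeartbeats 1000000

lemma cancel_mid' {A : Type*} [Monoid A] {p q : A} (h : p * q = 1) (y : A) :
    p * (q * y) = y := by rw [← mul_assoc, h, one_mul]

lemma rinv_eq' {A : Type*} [NormedRing A] {x y : A} (h1 : x * y = 1) (h2 : y * x = 1) :
    Ring.inverse x = y := by
  simpa using Ring.inverse_unit ⟨x, y, h1, h2⟩

lemma oneSub_inv' {A : Type*} [NormedRing A] [CompleteSpace A] (u : A) (h : ‖u‖ ≤ 1/2) :
    ∃ v : A, (1 - u) * v = 1 ∧ v * (1 - u) = 1 ∧ ‖v‖ ≤ 2 * ‖(1:A)‖ := by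
  have h1 : ‖u‖ < 1 := lt_of_le_of_lt h (by norm_num)
  have e1 : (1 - u) * (↑((Units.oneSub u h1)⁻¹) : A) = 1 := by
    simpa [Units.val_oneSub] using Units.mul_inv (Units.oneSub u h1)
  have e2 : (↑((Units.oneSub u h1)⁻¹) : A) * (1 - u) = 1 := by
    simpa [Units.val_oneSub] using Units.inv_mul (Units.oneSub u h1)
  refine ⟨(↑((Units.oneSub u h1)⁻¹) : A), e1, e2, ?_⟩
  set v : A := (↑((Units.oneSub u h1)⁻¹) : A) with hv
  have h3 : v - 1 = v * u := by rw [mul_sub, mul_one] at e2; rw [← e2]; noncomm_ring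
  have h4 : ‖v‖ - ‖(1:A)‖ ≤ ‖v‖ * ‖u‖ := by
    calc ‖v‖ - ‖(1:A)‖ ≤ ‖v - 1‖ := norm_sub_norm_le _ _
    _ = ‖v * u‖ := by rw [h3]
    _ ≤ ‖v‖ * ‖u‖ := norm_mul_le _ _
  nlinarith [norm_nonneg v, norm_nonneg u, norm_nonneg (1:A)]

lemma oneSub_inv_mem' {A : Type*} [NormedRing A] [NormedAlgebra ℂ A] [CompleteSpace A]
    (B : Subalgebra ℂ A) (hB : IsClosed (B : Set A)) {u : A} (hu : u ∈ B) (h : ‖u‖ < 1) :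
    ∃ v ∈ B, (1 - u) * v = 1 ∧ v * (1 - u) = 1 := by
  haveI : CompleteSpace B := hB.completeSpace_coe
  set ub : B := ⟨u, hu⟩
  have hn : ‖ub‖ < 1 := h
  refine ⟨(((Units.oneSub ub hn)⁻¹ : Bˣ) : B), (((Units.oneSub ub hn)⁻¹ : Bˣ) : B).2, ?_, ?_⟩
  · have := congrArg (Subtype.val) (Units.mul_inv (Units.oneSub ub hn))
    simpa [Units.val_oneSub] using this
  · have := congrArg (Subtype.val) (Units.inv_mul (Units.oneSub ub hn))
    simpa [Units.val_oneSub] using this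



/-- Dilation formula for the amalgamated S-transform: `Ψ_{za}(b) = Ψ_a(bz)`,
`S_z(Ψ_z(b)) = z⁻¹` for small `b`, and `S_{za}(b) = S_a(b)·S_z(b)` for invertible `b` of
sufficiently small norm (where `S_a(b) = b⁻¹(1+b)Ψ_a^{⟨-1⟩}(b)`, the local inverses being
witnessed by `c₁, c₂, c₃`). Commutativity of `B` is not required. -/
theorem stmt17 {A : Type*} [NormedRing A] [NormedAlgebra ℂ A] [CompleteSpace A]
    (B : Subalgebra ℂ A) (hB : IsClosed (B : Set A))
    (E : A →L[ℂ] A) (hrange : ∀ x : A, E x ∈ B) (hfix : ∀ x ∈ B, E x = x)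
    (hnorm : ∀ x : A, ‖E x‖ ≤ ‖x‖)
    (hbimod : ∀ b₁ ∈ B, ∀ b₂ ∈ B, ∀ x : A, E (b₁ * x * b₂) = b₁ * E x * b₂)
    (z a : A) (hzB : z ∈ B) (hz : ∃ c ∈ B, z * c = 1 ∧ c * z = 1)
    (ha : a ≠ 0) (hEa : ∃ c ∈ B, E a * c = 1 ∧ c * E a = 1) :
    (∀ b ∈ B, ‖b‖ < 1 / ‖z * a‖ → ‖b * z‖ < 1 / ‖a‖ →
      PsiA E (z * a) b = PsiA E a (b * z)) ∧
    ∃ δ > (0 : ℝ),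
      (∀ b ∈ B, (∃ c ∈ B, b * c = 1 ∧ c * b = 1) → ‖b‖ < δ →
        Ring.inverse (PsiA E z b) * (1 + PsiA E z b) * b = Ring.inverse z) ∧
      (∀ b c₁ c₂ c₃ : A, b ∈ B → c₁ ∈ B → c₂ ∈ B → c₃ ∈ B →
        (∃ c ∈ B, b * c = 1 ∧ c * b = 1) →
        ‖b‖ < δ → ‖c₁‖ < δ → ‖c₂‖ < δ → ‖c₃‖ < δ →
        PsiA E (z * a) c₁ = b → PsiA E a c₂ = b → PsiA E z c₃ = b →
        Ring.inverse b * (1 + b) * c₁ =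
          (Ring.inverse b * (1 + b) * c₂) * (Ring.inverse b * (1 + b) * c₃)) := by
  obtain ⟨w, hwB, hzw, hwz⟩ := hz
  obtain ⟨f, hfB, heaf, hfea⟩ := hEa
  have hinvz : Ring.inverse z = w := rinv_eq' hzw hwz
  constructor
  · intro b _ _ _
    simp only [PsiA, mul_assoc]
  -- constants
  have hn1 : (0:ℝ) ≤ ‖(1:A)‖ := norm_nonneg _
  have hna : (0:ℝ) ≤ ‖a‖ := norm_nonneg _
  have hnf : (0:ℝ) ≤ ‖f‖ := norm_nonneg _
  have hnz : (0:ℝ) ≤ ‖z‖ := norm_nonneg _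
  set n1 := ‖(1:A)‖ with hn1d
  set na := ‖a‖ with hnad
  set nf := ‖f‖ with hnfd
  set nz := ‖z‖ with hnzd
  set M : ℝ := (n1+1)*(nf+1)*(na+1)^2 with hM
  have hMpos : 0 < M := by positivity
  set θ : ℝ := 1/(12*M) with hθdef
  have hθpos : 0 < θ := by positivity
  have hmain : ∀ c : ℝ, c ≤ 6*M → θ*c ≤ 1/2 := by
    intro c hc
    have h6 : θ*(6*M) = 1/2 := by
      rw [hθdef]; field_simp; ring
    calc θ*c ≤ θ*(6*M) := mul_le_mul_of_nonneg_left hc hθpos.le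
    _ = 1/2 := h6
  have e12 : (1:ℝ) ≤ (n1+1)*(nf+1) := by nlinarith
  have eM : (na+1)^2 ≤ M := by nlinarith [e12, sq_nonneg (na+1)]
  have h1le6M : (1:ℝ) ≤ 6*M := by nlinarith [sq_nonneg na]
  have hna6M : na ≤ 6*M := by nlinarith [sq_nonneg na]
  have h2n1na6M : 2*n1*na ≤ 6*M := by
    have p1 : 2*na ≤ (na+1)^2 := by nlinarith [sq_nonneg na]
    have p2 : n1*(2*na) ≤ (n1+1)*((na+1)^2) :=
      mul_le_mul (by linarith) p1 (by positivity) (by linarith)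
    have p3 : (n1+1)*((na+1)^2) ≤ M := by
      have : (0:ℝ) ≤ (n1+1)*((na+1)^2)*nf := by positivity
      rw [hM]; ring_nf; nlinarith [this]
    linarith [p2, p3]
  have hK6M : 6*n1*nf*na^2 ≤ 6*M := by
    have q1 : n1*nf ≤ (n1+1)*(nf+1) := by nlinarith
    have q2 : na^2 ≤ (na+1)^2 := by nlinarith [sq_nonneg na]
    have q3 : (n1*nf)*na^2 ≤ ((n1+1)*(nf+1))*((na+1)^2) :=
      mul_le_mul q1 q2 (sq_nonneg na) (by positivity)
    rw [hM]; nlinarith [q3]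
  have hθhalf : θ ≤ 1/2 := by simpa using hmain 1 h1le6M
  have hθna : θ*na ≤ 1/2 := hmain na hna6M
  -- small multiplications land below θ
  have hsmall : ∀ t : A, ‖t‖ < θ/(nz+1) → ‖t*z‖ < θ := by
    intro t ht
    calc ‖t*z‖ ≤ ‖t‖*nz := norm_mul_le _ _
    _ ≤ ‖t‖*(nz+1) := by nlinarith [norm_nonneg t]
    _ < (θ/(nz+1))*(nz+1) := mul_lt_mul_of_pos_right ht (by positivity)
    _ = θ := div_mul_cancel₀ _ (by positivity)
  -- key computation for S_z
  have key2 : ∀ b, b ∈ B → (∃ c ∈ B, b * c = 1 ∧ c * b = 1) → ‖b * z‖ < 1 →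
      Ring.inverse (PsiA E z b) * (1 + PsiA E z b) * b = w := by
    rintro b hbB ⟨c, hcB, hbc, hcb⟩ hbz
    obtain ⟨v, hvB, hv1, hv2⟩ := oneSub_inv_mem' B hB (mul_mem hbB hzB) hbz
    have hpsi : PsiA E z b = v - 1 := by
      rw [PsiA, rinv_eq' hv1 hv2, hfix v hvB]
    have hvm : v - 1 = v * (b * z) := by
      have h := hv2
      rw [mul_sub, mul_one] at h
      rw [← h]; noncomm_ring
    have hq1 : (v - 1) * (w * (c * (1 - b * z))) = 1 := by
      rw [hvm]
      calc v * (b * z) * (w * (c * (1 - b*z)))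
          = v * (b * (z * (w * (c * (1 - b*z))))) := by simp only [mul_assoc]
      _ = v * (b * (c * (1-b*z))) := by rw [cancel_mid' hzw]
      _ = v * (1-b*z) := by rw [cancel_mid' hbc]
      _ = 1 := hv2
    have hq2 : (w * (c * (1 - b * z))) * (v - 1) = 1 := by
      rw [hvm]
      calc (w * (c * (1 - b*z))) * (v * (b * z))
          = w * (c * ((1-b*z) * (v * (b * z)))) := by simp only [mul_assoc]
      _ = w * (c * (b * z)) := by rw [cancel_mid' hv1]
      _ = w * z := by rw [cancel_mid' hcb]
      _ = 1 := hwz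
    rw [hpsi, rinv_eq' hq1 hq2]
    have h1v : 1 + (v - 1) = v := by noncomm_ring
    rw [h1v]
    calc w * (c * (1 - b*z)) * v * b = w * (c * ((1-b*z) * (v * b))) := by
          simp only [mul_assoc]
    _ = w * (c * b) := by rw [cancel_mid' hv1]
    _ = w * 1 := by rw [hcb]
    _ = w := mul_one w
  refine ⟨θ/(nz+1), by positivity, ?_, ?_⟩
  · -- part 2
    intro b hbB hbinv hbδ
    have hb1 : ‖b*z‖ < 1 := lt_of_lt_of_le (hsmall b hbδ) (by linarith)
    rw [hinvz]
    exact key2 b hbB hbinv hb1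
  -- part 3
  intro b c₁ c₂ c₃ hbB h1B h2B h3B hbinv hbδ h1δ h2δ h3δ hc1 hc2 hc3
  obtain ⟨cb, hcbB, hbcb, hcbb⟩ := hbinv
  have hδθ : θ/(nz+1) ≤ θ := div_le_self hθpos.le (by linarith)
  have hnc2 : ‖c₂‖ < θ := lt_of_lt_of_le h2δ hδθ
  have hnc1z : ‖c₁*z‖ < θ := hsmall c₁ h1δ
  have hnc3z : ‖c₃*z‖ < θ := hsmall c₃ h3δ
  -- Step A : c₂ = c₁ * z
  have hxa : ‖c₂*a‖ ≤ 1/2 := by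
    calc ‖c₂*a‖ ≤ ‖c₂‖*na := norm_mul_le _ _
    _ ≤ θ*na := mul_le_mul_of_nonneg_right hnc2.le hna
    _ ≤ 1/2 := hθna
  have hya : ‖(c₁*z)*a‖ ≤ 1/2 := by
    calc ‖(c₁*z)*a‖ ≤ ‖c₁*z‖*na := norm_mul_le _ _
    _ ≤ θ*na := mul_le_mul_of_nonneg_right hnc1z.le hna
    _ ≤ 1/2 := hθna
  obtain ⟨vx, hvx1, hvx2, hvxn⟩ := oneSub_inv' (c₂*a) hxa
  obtain ⟨vy, hvy1, hvy2, hvyn⟩ := oneSub_inv' ((c₁*z)*a) hya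
  have hc1' : PsiA E a (c₁*z) = b := by rw [← hc1]; simp only [PsiA, mul_assoc]
  have hExy : E vx = E vy := by
    have e1 := hc2
    rw [PsiA, rinv_eq' hvx1 hvx2] at e1
    have e2 := hc1'
    rw [PsiA, rinv_eq' hvy1 hvy2] at e2
    have := e1.trans e2.symm
    exact sub_left_inj.mp this
  have hdiff : vx - vy = vx * ((c₂ - c₁*z)*a) * vy := by
    have e1 : vx * ((1 - (c₁*z)*a) * vy) = vx := by rw [hvy1, mul_one]
    have e2 : (vx * (1 - c₂*a)) * vy = vy := by rw [hvx2, one_mul]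
    calc vx - vy = vx * ((1 - (c₁*z)*a) * vy) - (vx * (1 - c₂*a)) * vy := by rw [e1, e2]
    _ = vx * ((c₂ - c₁*z)*a) * vy := by noncomm_ring
  have hEdiff : E (vx - vy) = 0 := by rw [map_sub, hExy, sub_self]
  have hexp : vx * ((c₂ - c₁*z)*a) * vy = (c₂ - c₁*z)*a +
      ((vx - 1)*((c₂ - c₁*z)*a) + ((c₂ - c₁*z)*a)*(vy-1) +
        (vx-1)*((c₂ - c₁*z)*a)*(vy-1)) := by noncomm_ring
  have hEm : E ((c₂ - c₁*z)*a) = (c₂ - c₁*z) * (E a) := by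
    have := hbimod (c₂ - c₁*z) (sub_mem h2B (mul_mem h1B hzB)) 1 (one_mem B) a
    simpa using this
  have h0 : (c₂ - c₁*z) * (E a) + E ((vx - 1)*((c₂ - c₁*z)*a) + ((c₂ - c₁*z)*a)*(vy-1) +
      (vx-1)*((c₂ - c₁*z)*a)*(vy-1)) = 0 := by
    calc (c₂ - c₁*z) * (E a) + E ((vx - 1)*((c₂ - c₁*z)*a) + ((c₂ - c₁*z)*a)*(vy-1) +
        (vx-1)*((c₂ - c₁*z)*a)*(vy-1))
        = E ((c₂ - c₁*z)*a + ((vx - 1)*((c₂ - c₁*z)*a) + ((c₂ - c₁*z)*a)*(vy-1) +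
            (vx-1)*((c₂ - c₁*z)*a)*(vy-1))) := by
              conv_rhs => rw [map_add, hEm]
    _ = E (vx * ((c₂ - c₁*z)*a) * vy) := by rw [← hexp]
    _ = E (vx - vy) := by rw [← hdiff]
    _ = 0 := hEdiff
  set R : A := (vx - 1)*((c₂ - c₁*z)*a) + ((c₂ - c₁*z)*a)*(vy-1) +
      (vx-1)*((c₂ - c₁*z)*a)*(vy-1) with hRdef
  have heq : c₂ - c₁*z = (-(E R)) * f := by
    have h1 : (c₂ - c₁*z) * (E a) = -(E R) := eq_neg_of_add_eq_zero_left h0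
    calc c₂ - c₁*z = (c₂ - c₁*z) * ((E a) * f) := by rw [heaf, mul_one]
    _ = ((c₂ - c₁*z) * (E a)) * f := by rw [mul_assoc]
    _ = (-(E R)) * f := by rw [h1]
  have hd0 : (0:ℝ) ≤ ‖c₂ - c₁*z‖ := norm_nonneg _
  have hdm : ‖(c₂ - c₁*z)*a‖ ≤ ‖c₂ - c₁*z‖ * na := norm_mul_le _ _
  have hrx : ‖vx - 1‖ ≤ θ*(2*n1*na) := by
    have e : vx - 1 = vx * (c₂*a) := by
      have h := hvx2
      rw [mul_sub, mul_one] at h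
      rw [← h]; noncomm_ring
    calc ‖vx - 1‖ = ‖vx*(c₂*a)‖ := by rw [e]
    _ ≤ ‖vx‖*‖c₂*a‖ := norm_mul_le _ _
    _ ≤ (2*n1)*(θ*na) := by
        apply mul_le_mul hvxn ?_ (norm_nonneg _) (by positivity)
        calc ‖c₂*a‖ ≤ ‖c₂‖*na := norm_mul_le _ _
        _ ≤ θ*na := mul_le_mul_of_nonneg_right hnc2.le hna
    _ = θ*(2*n1*na) := by ring
  have hry : ‖vy - 1‖ ≤ θ*(2*n1*na) := by
    have e : vy - 1 = vy * ((c₁*z)*a) := by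
      have h := hvy2
      rw [mul_sub, mul_one] at h
      rw [← h]; noncomm_ring
    calc ‖vy - 1‖ = ‖vy*((c₁*z)*a)‖ := by rw [e]
    _ ≤ ‖vy‖*‖(c₁*z)*a‖ := norm_mul_le _ _
    _ ≤ (2*n1)*(θ*na) := by
        apply mul_le_mul hvyn ?_ (norm_nonneg _) (by positivity)
        calc ‖(c₁*z)*a‖ ≤ ‖c₁*z‖*na := norm_mul_le _ _
        _ ≤ θ*na := mul_le_mul_of_nonneg_right hnc1z.le hna
    _ = θ*(2*n1*na) := by ring
  have hτhalf : θ*(2*n1*na) ≤ 1/2 := hmain _ h2n1na6M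
  have hτ0 : (0:ℝ) ≤ θ*(2*n1*na) := by positivity
  have hm0 : (0:ℝ) ≤ ‖c₂ - c₁*z‖ * na := by positivity
  have t1 : ‖(vx - 1)*((c₂ - c₁*z)*a)‖ ≤ (θ*(2*n1*na))*(‖c₂ - c₁*z‖ * na) :=
    le_trans (norm_mul_le _ _) (mul_le_mul hrx hdm (norm_nonneg _) hτ0)
  have t2 : ‖((c₂ - c₁*z)*a)*(vy-1)‖ ≤ (θ*(2*n1*na))*(‖c₂ - c₁*z‖ * na) := by
    calc ‖((c₂ - c₁*z)*a)*(vy-1)‖ ≤ ‖(c₂ - c₁*z)*a‖*‖vy-1‖ := norm_mul_le _ _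
    _ ≤ (‖c₂ - c₁*z‖ * na)*(θ*(2*n1*na)) := mul_le_mul hdm hry (norm_nonneg _) hm0
    _ = (θ*(2*n1*na))*(‖c₂ - c₁*z‖ * na) := by ring
  have t3 : ‖(vx-1)*((c₂ - c₁*z)*a)*(vy-1)‖ ≤ (θ*(2*n1*na))*(‖c₂ - c₁*z‖ * na) := by
    calc ‖(vx-1)*((c₂ - c₁*z)*a)*(vy-1)‖ ≤ ‖(vx-1)*((c₂ - c₁*z)*a)‖*‖vy-1‖ :=
          norm_mul_le _ _
    _ ≤ ((θ*(2*n1*na))*(‖c₂ - c₁*z‖ * na))*(θ*(2*n1*na)) :=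
          mul_le_mul t1 hry (norm_nonneg _) (by positivity)
    _ ≤ ((θ*(2*n1*na))*(‖c₂ - c₁*z‖ * na))*1 := by
          apply mul_le_mul_of_nonneg_left (by linarith) (by positivity)
    _ = (θ*(2*n1*na))*(‖c₂ - c₁*z‖ * na) := by ring
  have hRn : ‖R‖ ≤ 3*((θ*(2*n1*na))*(‖c₂ - c₁*z‖ * na)) := by
    calc ‖R‖ ≤ ‖(vx - 1)*((c₂ - c₁*z)*a) + ((c₂ - c₁*z)*a)*(vy-1)‖ +
          ‖(vx-1)*((c₂ - c₁*z)*a)*(vy-1)‖ := norm_add_le _ _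
    _ ≤ (‖(vx - 1)*((c₂ - c₁*z)*a)‖ + ‖((c₂ - c₁*z)*a)*(vy-1)‖) +
          ‖(vx-1)*((c₂ - c₁*z)*a)*(vy-1)‖ := by gcongr; exact norm_add_le _ _
    _ ≤ 3*((θ*(2*n1*na))*(‖c₂ - c₁*z‖ * na)) := by linarith
  have hdle : ‖c₂ - c₁*z‖ ≤ ‖R‖ * nf := by
    calc ‖c₂ - c₁*z‖ = ‖(-(E R)) * f‖ := by rw [← heq]
    _ ≤ ‖-(E R)‖ * nf := norm_mul_le _ _
    _ = ‖E R‖ * nf := by rw [norm_neg]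
    _ ≤ ‖R‖ * nf := mul_le_mul_of_nonneg_right (hnorm R) hnf
  have hKhalf : θ*(6*n1*nf*na^2) ≤ 1/2 := hmain _ hK6M
  have hfin : ‖R‖ * nf ≤ ‖c₂ - c₁*z‖ * (θ*(6*n1*nf*na^2)) := by
    calc ‖R‖ * nf ≤ (3*((θ*(2*n1*na))*(‖c₂ - c₁*z‖ * na))) * nf :=
          mul_le_mul_of_nonneg_right hRn hnf
    _ = ‖c₂ - c₁*z‖ * (θ*(6*n1*nf*na^2)) := by ring
  have hprod : ‖c₂ - c₁*z‖ * (θ*(6*n1*nf*na^2)) ≤ ‖c₂ - c₁*z‖ * (1/2) :=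
    mul_le_mul_of_nonneg_left hKhalf hd0
  have hdzero : ‖c₂ - c₁*z‖ = 0 := by linarith
  have hc2eq : c₂ = c₁*z := sub_eq_zero.mp (norm_eq_zero.mp hdzero)
  -- Step C : invertibility of c₃ and S_z value
  obtain ⟨v3, hv3B, hv31, hv32⟩ := oneSub_inv_mem' B hB (mul_mem h3B hzB)
    (lt_of_lt_of_le hnc3z (by linarith))
  have hpsi3 : v3 - 1 = b := by
    have h := hc3
    rw [PsiA, rinv_eq' hv31 hv32, hfix v3 hv3B] at h
    exact h
  have hbm : b = v3 * (c₃*z) := by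
    rw [← hpsi3]
    have h := hv32
    rw [mul_sub, mul_one] at h
    rw [← h]; noncomm_ring
  have hc3e : c₃ = (1 - c₃*z)*(b*w) := by
    calc c₃ = c₃*(z*w) := by rw [hzw, mul_one]
    _ = (c₃*z)*w := by rw [mul_assoc]
    _ = ((1 - c₃*z)*(v3*(c₃*z)))*w := by rw [cancel_mid' hv31]
    _ = (1-c₃*z)*(b*w) := by rw [← hbm, mul_assoc]
  have hinv3a : c₃ * (z*(cb*v3)) = 1 := by
    conv_lhs => rw [hc3e]
    calc (1-c₃*z)*(b*w)*(z*(cb*v3)) = (1-c₃*z)*(b*(w*(z*(cb*v3)))) := by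
          simp only [mul_assoc]
    _ = (1-c₃*z)*(b*(cb*v3)) := by rw [cancel_mid' hwz]
    _ = (1-c₃*z)*v3 := by rw [cancel_mid' hbcb]
    _ = 1 := hv31
  have hinv3b : (z*(cb*v3)) * c₃ = 1 := by
    conv_lhs => rw [hc3e]
    calc (z*(cb*v3))*((1-c₃*z)*(b*w)) = z*(cb*(v3*((1-c₃*z)*(b*w)))) := by
          simp only [mul_assoc]
    _ = z*(cb*(b*w)) := by rw [cancel_mid' hv32]
    _ = z*w := by rw [cancel_mid' hcbb]
    _ = 1 := hzw
  have hSz : Ring.inverse b * (1+b) * c₃ = w := by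
    have h := key2 c₃ h3B ⟨z*(cb*v3), mul_mem hzB (mul_mem hcbB hv3B), hinv3a, hinv3b⟩
      (lt_of_lt_of_le hnc3z (by linarith))
    rwa [hc3] at h
  rw [hc2eq, hSz]
  simp only [mul_assoc]
  rw [hzw, mul_one]
end

section
/- Key identity in the proof of R-transform additivity: let b, b₁, b₂ be invertible elements of B with b = g_{a₁}(b₁) = g_{a₂}(b₂), and set A₁ = (b₁⁻¹ − a₁)⁻¹ − b, A₂ = (b₂⁻¹ − a₂)⁻¹ − b, b₃⁻¹ = b₁⁻¹ + b₂⁻¹ − b⁻¹. Then (b₁⁻¹ − a₁)·b·(1 − b⁻¹A₁b⁻¹A₂)·(b₂⁻¹ − a₂) = b₃⁻¹ − (a₁ + a₂), and hence when all factors are invertible, (b₃⁻¹ − (a₁+a₂))⁻¹ = (b₂⁻¹ − a₂)⁻¹ (1 − b⁻¹A₁b⁻¹A₂)⁻¹ b⁻¹ (b₁⁻¹ − a₁)⁻¹. -/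
/-- Key identity in the proof of R-transform additivity, with
`A₁ = (b₁⁻¹ - a₁)⁻¹ - b`, `A₂ = (b₂⁻¹ - a₂)⁻¹ - b` and `b₃⁻¹ = b₁⁻¹ + b₂⁻¹ - b⁻¹`. -/
theorem stmt18 {A : Type*} [NormedRing A] [NormedAlgebra ℂ A] [CompleteSpace A]
    (B : Subalgebra ℂ A) (hB : IsClosed (B : Set A))
    (E : A →L[ℂ] A) (hrange : ∀ x : A, E x ∈ B) (hfix : ∀ x ∈ B, E x = x)
    (hnorm : ∀ x : A, ‖E x‖ ≤ ‖x‖)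
    (hbimod : ∀ b₁ ∈ B, ∀ b₂ ∈ B, ∀ x : A, E (b₁ * x * b₂) = b₁ * E x * b₂)
    (a₁ a₂ b b₁ b₂ b₃ : A)
    (hb : IsUnit b) (hb₁ : IsUnit b₁) (hb₂ : IsUnit b₂) (hb₃ : IsUnit b₃)
    (hg₁ : gA E a₁ b₁ = b) (hg₂ : gA E a₂ b₂ = b)
    (hu₁ : IsUnit (Ring.inverse b₁ - a₁)) (hu₂ : IsUnit (Ring.inverse b₂ - a₂))
    (hb₃def : Ring.inverse b₃ = Ring.inverse b₁ + Ring.inverse b₂ - Ring.inverse b) :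
    ((Ring.inverse b₁ - a₁) * b *
        (1 - Ring.inverse b * (Ring.inverse (Ring.inverse b₁ - a₁) - b) *
          Ring.inverse b * (Ring.inverse (Ring.inverse b₂ - a₂) - b)) *
        (Ring.inverse b₂ - a₂) = Ring.inverse b₃ - (a₁ + a₂)) ∧
    (IsUnit (1 - Ring.inverse b * (Ring.inverse (Ring.inverse b₁ - a₁) - b) *
        Ring.inverse b * (Ring.inverse (Ring.inverse b₂ - a₂) - b)) →
      IsUnit (Ring.inverse b₃ - (a₁ + a₂)) →
      Ring.inverse (Ring.inverse b₃ - (a₁ + a₂)) =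
        Ring.inverse (Ring.inverse b₂ - a₂) *
          Ring.inverse (1 - Ring.inverse b * (Ring.inverse (Ring.inverse b₁ - a₁) - b) *
            Ring.inverse b * (Ring.inverse (Ring.inverse b₂ - a₂) - b)) *
          Ring.inverse b * Ring.inverse (Ring.inverse b₁ - a₁)) := by
  set u₁ : A := Ring.inverse b₁ - a₁ with hu₁def
  set u₂ : A := Ring.inverse b₂ - a₂ with hu₂def
  set v₁ : A := Ring.inverse u₁ with hv₁def
  set v₂ : A := Ring.inverse u₂ with hv₂def
  set ib : A := Ring.inverse b with hibdef
  have hbib : b * ib = 1 := Ring.mul_inverse_cancel _ hb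
  have hibb : ib * b = 1 := Ring.inverse_mul_cancel _ hb
  have hu₁v₁ : u₁ * v₁ = 1 := Ring.mul_inverse_cancel _ hu₁
  have hv₁u₁ : v₁ * u₁ = 1 := Ring.inverse_mul_cancel _ hu₁
  have hu₂v₂ : u₂ * v₂ = 1 := Ring.mul_inverse_cancel _ hu₂
  have hv₂u₂ : v₂ * u₂ = 1 := Ring.inverse_mul_cancel _ hu₂
  set w : A := 1 - ib * (v₁ - b) * ib * (v₂ - b) with hwdef
  have c1 : u₁ * b * ib = u₁ := by rw [mul_assoc, hbib, mul_one]
  have c2 : u₁ * (v₁ - b) = 1 - u₁ * b := by rw [mul_sub, hu₁v₁]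
  have c3 : (v₂ - b) * u₂ = 1 - b * u₂ := by rw [sub_mul, hv₂u₂]
  have c4 : (1 - u₁ * b) * ib = ib - u₁ := by
    rw [sub_mul, one_mul, mul_assoc, hbib, mul_one]
  have hT : u₁ * b * (ib * (v₁ - b) * ib * (v₂ - b)) * u₂ = (ib - u₁) * (1 - b * u₂) := by
    rw [show u₁ * b * (ib * (v₁ - b) * ib * (v₂ - b)) * u₂
        = u₁ * b * ib * (v₁ - b) * ib * ((v₂ - b) * u₂) from by noncomm_ring, c1, c2, c3, c4]
  have c5 : (ib - u₁) * (1 - b * u₂) = ib - ib * b * u₂ - u₁ + u₁ * (b * u₂) := by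
    noncomm_ring
  have key : u₁ * b * w * u₂ = u₁ + u₂ - ib := by
    rw [show u₁ * b * w * u₂
        = u₁ * (b * u₂) - u₁ * b * (ib * (v₁ - b) * ib * (v₂ - b)) * u₂ from by
          rw [hwdef]; noncomm_ring, hT, c5, hibb, one_mul]
    abel
  have hrhs : Ring.inverse b₃ - (a₁ + a₂) = u₁ + u₂ - ib := by
    rw [hb₃def, hu₁def, hu₂def, hibdef]; abel
  have part1 : u₁ * b * w * u₂ = Ring.inverse b₃ - (a₁ + a₂) := by rw [key, hrhs]
  refine ⟨part1, fun hw hD => ?_⟩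
  set y : A := v₂ * Ring.inverse w * ib * v₁ with hydef
  have hwiw : w * Ring.inverse w = 1 := Ring.mul_inverse_cancel _ hw
  have hDy : (u₁ * b * w * u₂) * y = 1 := by
    rw [show (u₁ * b * w * u₂) * y
        = u₁ * b * w * (u₂ * v₂) * Ring.inverse w * ib * v₁ from by rw [hydef]; noncomm_ring,
      hu₂v₂, mul_one,
      show u₁ * b * w * Ring.inverse w * ib * v₁
        = u₁ * b * (w * Ring.inverse w) * ib * v₁ from by noncomm_ring,
      hwiw, mul_one, c1, hu₁v₁]
  rw [← part1]
  calc Ring.inverse (u₁ * b * w * u₂)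
      = Ring.inverse (u₁ * b * w * u₂) * ((u₁ * b * w * u₂) * y) := by rw [hDy, mul_one]
    _ = (Ring.inverse (u₁ * b * w * u₂) * (u₁ * b * w * u₂)) * y := (mul_assoc _ _ _).symm
    _ = y := by rw [Ring.inverse_mul_cancel _ (part1 ▸ hD), one_mul]
end

section
/- Key identity in the proof of S-transform multiplicativity: let B be commutative, b invertible in B with 1+b and b⁻¹(1+b) defined, and b₁, b₂ invertible in B with b = Ψ_{a₁}(b₁) = Ψ_{a₂}(b₂), so 1+b = E((1−b₁a₁)⁻¹) = E((1−a₂b₂)⁻¹). Set A₁ = (1−b₁a₁)⁻¹ − (1+b) and A₂ = (1−a₂b₂)⁻¹ − (1+b). Then (1−b₁a₁)·b·(1 − b⁻¹A₁(1+b)⁻¹A₂)·(1−a₂b₂) = b(1+b)⁻¹·(1 − b⁻¹(1+b)·b₁a₁a₂b₂). -/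
lemma stmt19_aux {A : Type*} [Ring A] (x y b I J U V : A)
    (hbI : b * I = 1) (h1bJ : (1 + b) * J = 1) (hJ1b : J * (1 + b) = 1)
    (hbJ : b * J = J * b)
    (hU : (1 - x) * U = 1) (hV : V * (1 - y) = 1) :
    (1 - x) * b * (1 - I * (U - (1 + b)) * J * (V - (1 + b))) * (1 - y) =
      b * J * (1 - I * (1 + b) * (x * y)) := by
  have k1 : b * J * (I * (1 + b)) = 1 := by
    have h : J * b * (I * (1 + b)) = J * ((b * I) * (1 + b)) := by noncomm_ring
    rw [hbJ, h, hbI, one_mul, hJ1b]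
  have k2 : b * J = 1 - J := by
    have h : b * J = (1 + b) * J - J := by noncomm_ring
    rw [h, h1bJ]
  have e4 : b * J * (1 - I * (1 + b) * (x * y)) = b * J - (b * J * (I * (1 + b))) * (x * y) := by
    noncomm_ring
  rw [e4, k1, one_mul]
  have e1 : (1 - x) * b * (1 - I * (U - (1 + b)) * J * (V - (1 + b))) * (1 - y)
      = (1 - x) * b * (1 - y)
        - (1 - x) * (b * I) * ((U - (1 + b)) * (J * ((V - (1 + b)) * (1 - y)))) := by
    noncomm_ring
  rw [e1, hbI, mul_one]
  have e2 : (1 - x) * ((U - (1 + b)) * (J * ((V - (1 + b)) * (1 - y))))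
      = ((1 - x) * U - (1 - x) * (1 + b)) * (J * (V * (1 - y) - (1 + b) * (1 - y))) := by
    noncomm_ring
  rw [e2, hU, hV]
  have e3 : (1 - (1 - x) * (1 + b)) * (J * (1 - (1 + b) * (1 - y)))
      = J - (J * (1 + b)) * (1 - y) - (1 - x) * ((1 + b) * J)
        + (1 - x) * ((1 + b) * J) * ((1 + b) * (1 - y)) := by
    noncomm_ring
  rw [e3, hJ1b, h1bJ, one_mul, mul_one, k2]
  noncomm_ring

/-- Key identity in the proof of S-transform multiplicativity, with
`A₁ = (1-b₁a₁)⁻¹ - (1+b)` and `A₂ = (1-a₂b₂)⁻¹ - (1+b)`. -/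
theorem stmt19 {A : Type*} [NormedRing A] [NormedAlgebra ℂ A] [CompleteSpace A]
    (B : Subalgebra ℂ A) (hB : IsClosed (B : Set A))
    (hcomm : ∀ x ∈ B, ∀ y ∈ B, x * y = y * x)
    (E : A →L[ℂ] A) (hrange : ∀ x : A, E x ∈ B) (hfix : ∀ x ∈ B, E x = x)
    (hnorm : ∀ x : A, ‖E x‖ ≤ ‖x‖)
    (hbimod : ∀ b₁ ∈ B, ∀ b₂ ∈ B, ∀ x : A, E (b₁ * x * b₂) = b₁ * E x * b₂)
    (a₁ a₂ b b₁ b₂ : A) (hbB : b ∈ B) (hb₁B : b₁ ∈ B) (hb₂B : b₂ ∈ B)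
    (hbinv : ∃ c ∈ B, b * c = 1 ∧ c * b = 1)
    (h1binv : ∃ c ∈ B, (1 + b) * c = 1 ∧ c * (1 + b) = 1)
    (hb₁inv : ∃ c ∈ B, b₁ * c = 1 ∧ c * b₁ = 1)
    (hb₂inv : ∃ c ∈ B, b₂ * c = 1 ∧ c * b₂ = 1)
    (hn₁ : ‖b₁‖ * ‖a₁‖ < 1) (hn₂ : ‖b₂‖ * ‖a₂‖ < 1)
    (hΨ₁ : PsiA E a₁ b₁ = b) (hΨ₂ : PsiA E a₂ b₂ = b)
    (h1b₁ : (1 : A) + b = E (Ring.inverse (1 - b₁ * a₁)))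
    (h1b₂ : (1 : A) + b = E (Ring.inverse (1 - a₂ * b₂))) :
    (1 - b₁ * a₁) * b *
        (1 - Ring.inverse b * (Ring.inverse (1 - b₁ * a₁) - (1 + b)) *
          Ring.inverse (1 + b) * (Ring.inverse (1 - a₂ * b₂) - (1 + b))) *
        (1 - a₂ * b₂) =
      b * Ring.inverse (1 + b) *
        (1 - Ring.inverse b * (1 + b) * (b₁ * a₁ * a₂ * b₂)) := by
  obtain ⟨I, hIB, hbI, hIb⟩ := hbinv
  obtain ⟨J, hJB, h1bJ, hJ1b⟩ := h1binv
  have hIeq : Ring.inverse b = I := Ring.inverse_unit ⟨b, I, hbI, hIb⟩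
  have hJeq : Ring.inverse (1 + b) = J := Ring.inverse_unit ⟨1 + b, J, h1bJ, hJ1b⟩
  have hu : IsUnit (1 - b₁ * a₁) :=
    (Units.oneSub (b₁ * a₁) (lt_of_le_of_lt (norm_mul_le _ _) hn₁)).isUnit
  have hv : IsUnit (1 - a₂ * b₂) :=
    (Units.oneSub (a₂ * b₂) (lt_of_le_of_lt (norm_mul_le _ _) (by rwa [mul_comm ‖a₂‖]))).isUnit
  have hU : (1 - b₁ * a₁) * Ring.inverse (1 - b₁ * a₁) = 1 := Ring.mul_inverse_cancel _ hu
  have hV : Ring.inverse (1 - a₂ * b₂) * (1 - a₂ * b₂) = 1 := Ring.inverse_mul_cancel _ hv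
  have hbJ : b * J = J * b := hcomm b hbB J hJB
  rw [hIeq, hJeq]
  have := stmt19_aux (b₁ * a₁) (a₂ * b₂) b I J
    (Ring.inverse (1 - b₁ * a₁)) (Ring.inverse (1 - a₂ * b₂))
    hbI h1bJ hJ1b hbJ hU hV
  rw [mul_assoc (b₁ * a₁) a₂ b₂]
  exact this
end
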